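/- arXiv:1006.1532 — 8 statements merged into one kernel-verified Lean document; each statement's English description precedes it below -/
import Mathlib

section
/- Hill's formula for discrete Lagrangian systems: for a periodic linear discrete Lagrangian system with monodromy matrix P and Hessian H, one has det(P − I_{2m}) = (−1)^m · det(H) / (∏_{i=1}^n det B_i). -/
open Matrix BigOperators

/-- The transfer matrix `T_i` of a periodic linear discrete Lagrangian system,
sending `(u_{i-1}, u_i)` to `(u_i, (B_iᵀ)⁻¹ (A_i u_i - B_{i-1} u_{i-1}))`,
written as a block matrix. -/
noncomputable def transferMatrix (m : ℕ) (A B : ℤ → Matrix (Fin m) (Fin m) ℝ) (i : ℤ) :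
    Matrix (Fin m ⊕ Fin m) (Fin m ⊕ Fin m) ℝ :=
  Matrix.fromBlocks 0 1 (-(((B i)ᵀ)⁻¹ * B (i - 1))) (((B i)ᵀ)⁻¹ * A i)

/-- The monodromy matrix `P = T_n ⋯ T_1`. -/
noncomputable def monodromy (m n : ℕ) (A B : ℤ → Matrix (Fin m) (Fin m) ℝ) :
    Matrix (Fin m ⊕ Fin m) (Fin m ⊕ Fin m) ℝ :=
  (List.range n).foldl (fun M i => transferMatrix m A B ((i : ℤ) + 1) * M) 1

/-- The Hessian of the action: the symmetric `(mn) × (mn)` matrix acting by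
`(H u)_i = A_i u_i - B_{i-1} u_{i-1} - B_iᵀ u_{i+1}` with cyclic conventions. -/
noncomputable def hessian (m n : ℕ) [NeZero n] (A B : ℤ → Matrix (Fin m) (Fin m) ℝ) :
    Matrix (Fin n × Fin m) (Fin n × Fin m) ℝ :=
  fun p q =>
    (if q.1 = p.1 then A ((p.1 : ℕ) : ℤ) p.2 q.2 else 0)
    + (if q.1 = p.1 - 1 then -(B (((p.1 : ℕ) : ℤ) - 1) p.2 q.2) else 0)
    + (if q.1 = p.1 + 1 then -(B ((p.1 : ℕ) : ℤ) q.2 p.2) else 0)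

/-!
Stack the transfer relations `(u_i, u_{i+1}) = T_{i+1} (u_{i-1}, u_i)` over one period into the
cyclic block-bidiagonal matrix `K` with diagonal blocks `T_1, …, T_n` and `-1` on the cyclic
superdiagonal. Multiplying `K` on the right by the unipotent block upper-triangular matrix of
inverse partial products `(T_j ⋯ T_{i+1})⁻¹` makes it block lower-triangular, with diagonal
`T_1, …, T_{n-1}, (P - 1)(T_{n-1} ⋯ T_1)⁻¹`; hence `det K = det (P - 1)`.
Multiplying `K` on the left by the block lower-bidiagonal matrix `F` which scales the momentum
rows by `B_iᵀ` and eliminates the resulting `-B_{i-1}` blocks gives a matrix which, once the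
coordinates are split into positions and momenta, is block upper-triangular: its diagonal blocks
are the negated cyclic shift, of determinant `(-1)^m`, and the Hessian with indices shifted by one.
Since `det F = ∏ det B_i`, the formula follows.
-/

namespace Matrix

variable {ι σ κ R : Type*}

theorem comp_mul [Fintype ι] [Semiring R] [Fintype σ] (M N : Matrix ι ι (Matrix σ σ R)) :
    comp ι ι σ σ R (M * N) = comp ι ι σ σ R M * comp ι ι σ σ R N :=
  map_mul (compRingEquiv ι σ R) M N

theorem det_comp_of_blockTriangular [Fintype ι] [DecidableEq ι] [CommRing R] [Fintype σ]
    [DecidableEq σ] {α : Type*} [LinearOrder α] {M : Matrix ι ι (Matrix σ σ R)} (e : ι ≃ α)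
    (hM : M.BlockTriangular e) :
    (comp ι ι σ σ R M).det = ∏ i, (M i i).det := by
  let _ : Fintype α := .ofEquiv ι e
  rw [hM.comp.det_fintype, ← e.prod_comp]
  refine Finset.prod_congr rfl fun i _ => ?_
  let f : σ ≃ {p : ι × σ // e p.1 = e i} :=
    { toFun := fun a => ⟨(i, a), rfl⟩
      invFun := fun p => p.1.2
      left_inv := fun _ => rfl
      right_inv := fun ⟨⟨j, a⟩, h⟩ => by cases e.injective h; rfl }
  exact (det_submatrix_equiv_self f _).symm

theorem comp_reindex_prodSumDistrib (M : Matrix ι ι (Matrix (σ ⊕ κ) (σ ⊕ κ) R)) :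
    reindex (Equiv.prodSumDistrib ι σ κ) (Equiv.prodSumDistrib ι σ κ) (comp ι ι _ _ R M) =
      fromBlocks (comp ι ι σ σ R (M.map toBlocks₁₁))
        (comp ι ι σ κ R (M.map toBlocks₁₂)) (comp ι ι κ σ R (M.map toBlocks₂₁))
        (comp ι ι κ κ R (M.map toBlocks₂₂)) := by
  ext (⟨i, a⟩ | ⟨i, a⟩) (⟨j, b⟩ | ⟨j, b⟩) <;> rfl

theorem fromBlocks_sub [Sub R] (A A' : Matrix ι ι R) (B B' : Matrix ι σ R)
    (C C' : Matrix σ ι R) (D D' : Matrix σ σ R) :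
    fromBlocks A B C D - fromBlocks A' B' C' D' =
      fromBlocks (A - A') (B - B') (C - C') (D - D') := by
  ext (_ | _) (_ | _) <;> rfl

theorem isUnit_det_fromBlocks_zero_one [CommRing R] [Fintype σ] [DecidableEq σ]
    {C D : Matrix σ σ R} (hC : IsUnit C.det) : IsUnit (fromBlocks 0 1 C D).det := by
  refine isUnit_det_of_right_inverse (B := fromBlocks (-(C⁻¹ * D)) C⁻¹ 1 0) ?_
  rw [fromBlocks_multiply, ← fromBlocks_one]
  simp [← Matrix.mul_assoc, mul_nonsing_inv _ hC]

theorem det_neg_cyclicShift [CommRing R] (n : ℕ) [NeZero n] :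
    (of fun i j : Fin n => if j = i + 1 then (-1 : R) else 0).det = -1 := by
  obtain ⟨N, rfl⟩ := Nat.exists_eq_succ_of_ne_zero (NeZero.ne n)
  have h : (of fun i j : Fin (N + 1) => if j = i + 1 then (-1 : R) else 0) =
      -(1 : Matrix (Fin (N + 1)) (Fin (N + 1)) R).submatrix (finRotate (N + 1)) id := by
    ext i j
    simp only [of_apply, neg_apply, submatrix_apply, one_apply, finRotate_apply, id_eq,
      eq_comm (a := j)]
    split_ifs <;> simp
  rw [h, det_neg, det_permute, sign_finRotate, det_one, Fintype.card_fin]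
  push_cast
  rw [mul_one, ← pow_add, Odd.neg_one_pow ⟨N, by omega⟩]

theorem det_comp_neg_cyclicShift [Fintype σ] [DecidableEq σ] [CommRing R] (n : ℕ) [NeZero n] :
    (comp (Fin n) (Fin n) σ σ R fun i j => if j = i + 1 then -1 else 0).det =
      (-1) ^ Fintype.card σ := by
  have h : (comp (Fin n) (Fin n) σ σ R fun i j => if j = i + 1 then -1 else 0) =
      kroneckerMap (· * ·) (of fun i j : Fin n => if j = i + 1 then (-1 : R) else 0) 1 := by
    ext ⟨i, a⟩ ⟨j, b⟩
    change (if j = i + 1 then (-1 : Matrix σ σ R) else 0) a b = _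
    by_cases h : j = i + 1 <;> by_cases hab : a = b <;> simp [h, hab]
  rw [h, det_kronecker, det_neg_cyclicShift, det_one, one_pow, mul_one]

end Matrix

namespace Function.Periodic

theorem apply_fin_add_one {α : Type*} {f : ℤ → α} {n : ℕ} [NeZero n] (hf : Periodic f n)
    (i : Fin n) : f ((i + 1 : Fin n) : ℕ) = f ((i : ℕ) + 1) := by
  rw [Fin.val_add, Fin.val_one', Nat.add_mod_mod, Int.natCast_mod, Int.emod_def, mul_comm]
  push_cast
  exact hf.sub_int_mul_eq _

end Function.Periodic

section CyclicBidiagonal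

variable {σ R : Type*} [Fintype σ] [DecidableEq σ] [CommRing R]

def leftProd (T : ℕ → Matrix σ σ R) : ℕ → Matrix σ σ R
  | 0 => 1
  | k + 1 => T k * leftProd T k

theorem det_leftProd (T : ℕ → Matrix σ σ R) (k : ℕ) :
    (leftProd T k).det = ∏ i : Fin k, (T i).det := by
  induction k with
  | zero => simp [leftProd]
  | succ k ih => rw [leftProd, det_mul, ih, Fin.prod_univ_castSucc, mul_comm]; rfl

theorem isUnit_det_leftProd {T : ℕ → Matrix σ σ R} (hT : ∀ k, IsUnit (T k).det) (k : ℕ) :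
    IsUnit (leftProd T k).det := by
  induction k with
  | zero => simp [leftProd]
  | succ k ih => rw [leftProd, det_mul]; exact (hT k).mul ih

def cyclicBidiagonal (n : ℕ) [NeZero n] (T : ℕ → Matrix σ σ R) :
    Matrix (Fin n) (Fin n) (Matrix σ σ R) :=
  fun i j => (if j = i then T i else 0) - (if j = i + 1 then 1 else 0)

variable {n : ℕ} [NeZero n]

theorem cyclicBidiagonal_mul_apply (T : ℕ → Matrix σ σ R)
    (M : Matrix (Fin n) (Fin n) (Matrix σ σ R)) (i j : Fin n) :
    (cyclicBidiagonal n T * M) i j = T i * M i j - M (i + 1) j := by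
  simp [mul_apply, cyclicBidiagonal, sub_mul, Finset.sum_sub_distrib]

theorem mul_cyclicBidiagonal_apply (T : ℕ → Matrix σ σ R)
    (M : Matrix (Fin n) (Fin n) (Matrix σ σ R)) (i j : Fin n) :
    (M * cyclicBidiagonal n T) i j = M i j * T j - M i (j - 1) := by
  simp [mul_apply, cyclicBidiagonal, mul_sub, Finset.sum_sub_distrib, ← sub_eq_iff_eq_add]

theorem det_comp_cyclicBidiagonal {T : ℕ → Matrix σ σ R} (hT : ∀ k, IsUnit (T k).det) :
    (comp _ _ σ σ R (cyclicBidiagonal n T)).det = (leftProd T n - 1).det := by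
  obtain ⟨N, rfl⟩ := Nat.exists_eq_succ_of_ne_zero (NeZero.ne n)
  set Q := leftProd T
  have hQ (k : ℕ) : Q k * (Q k)⁻¹ = 1 := mul_nonsing_inv _ (isUnit_det_leftProd hT k)
  -- `Q i * (Q j)⁻¹ = (T (j - 1) * ⋯ * T i)⁻¹`: rows of the product telescope above the diagonal
  let U : Matrix (Fin (N + 1)) (Fin (N + 1)) (Matrix σ σ R) :=
    fun i j => if i ≤ j then Q i * (Q j)⁻¹ else 0
  have hU : (comp _ _ σ σ R U).det = 1 := by
    rw [det_comp_of_blockTriangular (M := U) (Equiv.refl _) fun i j h => if_neg (not_le.2 h)]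
    simp [U, hQ]
  have hKU : (cyclicBidiagonal (N + 1) T * U).BlockTriangular OrderDual.toDual := by
    intro i j (hij : i < j)
    have hi : ((i + 1 : Fin (N + 1)) : ℕ) = i + 1 :=
      Fin.val_add_one_of_lt (Fin.lt_last_iff_ne_last.2 (Fin.ne_last_of_lt hij))
    rw [cyclicBidiagonal_mul_apply]
    simp only [U, if_pos hij.le, if_pos (show i + 1 ≤ j from Fin.le_def.2 (hi ▸ hij)), hi]
    rw [← Matrix.mul_assoc]
    exact sub_self _
  have hdiag (i : Fin N) : (cyclicBidiagonal (N + 1) T * U) i.castSucc i.castSucc = T i := by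
    have hnot : ¬ i.castSucc + 1 ≤ i.castSucc := by simp [Fin.le_def]
    rw [cyclicBidiagonal_mul_apply]
    simp only [U, if_pos le_rfl, if_neg hnot, hQ, Matrix.mul_one, sub_zero, Fin.val_castSucc]
  have hlast : (cyclicBidiagonal (N + 1) T * U) (Fin.last N) (Fin.last N) =
      (Q (N + 1) - 1) * (Q N)⁻¹ := by
    rw [cyclicBidiagonal_mul_apply]
    simp [U, hQ, Q, leftProd, sub_mul, Matrix.mul_assoc]
  calc (comp _ _ σ σ R (cyclicBidiagonal (N + 1) T)).det
      = (comp _ _ σ σ R (cyclicBidiagonal (N + 1) T * U)).det := by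
        rw [comp_mul, det_mul, hU, mul_one]
    _ = (Q N).det * ((Q (N + 1) - 1).det * (Q N)⁻¹.det) := by
      rw [det_comp_of_blockTriangular _ hKU, Fin.prod_univ_castSucc, hlast, det_mul, det_leftProd]
      simp only [hdiag]
    _ = (Q (N + 1) - 1).det := by rw [mul_left_comm, ← det_mul, hQ, det_one, mul_one]

end CyclicBidiagonal

section Hill

noncomputable def hillReduction (m n : ℕ) [NeZero n] (B : ℤ → Matrix (Fin m) (Fin m) ℝ) :
    Matrix (Fin n) (Fin n) (Matrix (Fin m ⊕ Fin m) (Fin m ⊕ Fin m) ℝ) :=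
  fun i j => fromBlocks (if j = i then 1 else 0) 0
    (if j = i - 1 then -B i else 0) (if j = i then (B (i + 1))ᵀ else 0)

noncomputable def hillTriangularForm (m n : ℕ) [NeZero n]
    (A B : ℤ → Matrix (Fin m) (Fin m) ℝ) :
    Matrix (Fin n) (Fin n) (Matrix (Fin m ⊕ Fin m) (Fin m ⊕ Fin m) ℝ) :=
  fun i j => fromBlocks (if j = i + 1 then -1 else 0) (if j = i then 1 else 0) 0
    ((hessian m n A B).submatrix (Prod.mk (i + 1)) (Prod.mk (j + 1)))

variable {m n : ℕ} {A B : ℤ → Matrix (Fin m) (Fin m) ℝ}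

theorem monodromy_eq_leftProd :
    monodromy m n A B = leftProd (fun k => transferMatrix m A B (k + 1)) n := by
  have h (k : ℕ) : monodromy m k A B =
      (List.range k).foldl (fun M (i : ℕ) => transferMatrix m A B (i + 1) * M) 1 := by
    simp [monodromy, ← List.map_eq_flatMap, List.foldl_map]
  induction n with
  | zero => rfl
  | succ n ih => rw [h, List.range_succ, List.foldl_append, ← h, ih]; rfl

theorem isUnit_det_transferMatrix (hB : ∀ i, IsUnit (B i).det) (i : ℤ) :
    IsUnit (transferMatrix m A B i).det := by
  refine isUnit_det_fromBlocks_zero_one ?_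
  have hBt : IsUnit (B i)ᵀ.det := by rw [det_transpose]; exact hB i
  rw [det_neg, det_mul]
  exact (isUnit_neg_one.pow _).mul ((isUnit_nonsing_inv_det _ hBt).mul (hB _))

variable [NeZero n]

theorem hillReduction_mul_cyclicBidiagonal (hA : Function.Periodic A n)
    (hB : Function.Periodic B n) (hBinv : ∀ i, IsUnit (B i).det) :
    hillReduction m n B * cyclicBidiagonal n (fun k => transferMatrix m A B (k + 1)) =
      hillTriangularForm m n A B := by
  ext1 i j
  rw [mul_cyclicBidiagonal_apply]
  simp only [hillReduction, hillTriangularForm, transferMatrix, fromBlocks_multiply,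
    fromBlocks_sub]
  have hBt : IsUnit (B (j + 1))ᵀ.det := by rw [det_transpose]; exact hBinv _
  congr 1
  · split_ifs <;> simp_all [sub_eq_iff_eq_add]
  · simp
  · by_cases h : j = i
    · subst h; simp [mul_nonsing_inv_cancel_left _ _ hBt]
    · simp [h]
  · have hA1 : A ((i + 1 : Fin n) : ℕ) = A ((i : ℕ) + 1) := hA.apply_fin_add_one i
    have hB1 : B ((i + 1 : Fin n) : ℕ) = B ((i : ℕ) + 1) := hB.apply_fin_add_one i
    have hB0 : B (((i + 1 : Fin n) : ℕ) - 1) = B i := by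
      simpa using (hB.sub_const 1).apply_fin_add_one i
    have hA0 : (if j = i then (B (i + 1))ᵀ else 0) * ((B (j + 1))ᵀ⁻¹ * A (j + 1)) =
        if j = i then A (i + 1) else 0 := by
      split_ifs with h
      · subst h; exact mul_nonsing_inv_cancel_left _ _ hBt
      · exact Matrix.zero_mul _
    ext a b
    simp only [hessian, submatrix_apply, hA1, hB1, hB0, hA0, add_sub_cancel_right,
      ← eq_sub_iff_add_eq, sub_eq_iff_eq_add, Matrix.mul_one]
    split_ifs <;> simp only [Matrix.sub_apply, Matrix.add_apply, Matrix.neg_apply,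
      Matrix.zero_apply, transpose_apply] <;> ring

theorem det_comp_hillReduction :
    (comp _ _ _ _ ℝ (hillReduction m n B)).det = ∏ i : Fin n, (B (i + 1)).det := by
  rw [← det_reindex_self (Equiv.prodSumDistrib _ _ _), comp_reindex_prodSumDistrib]
  rw [show comp _ _ _ _ ℝ ((hillReduction m n B).map toBlocks₁₂) = 0 from rfl,
    det_fromBlocks_zero₁₂,
    det_comp_of_blockTriangular (Equiv.refl _) fun i j (h : j < i) => by simp [hillReduction, h.ne],
    det_comp_of_blockTriangular (Equiv.refl _) fun i j (h : j < i) => by simp [hillReduction, h.ne]]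
  simp [hillReduction]

theorem det_comp_hillTriangularForm :
    (comp _ _ _ _ ℝ (hillTriangularForm m n A B)).det = (-1) ^ m * (hessian m n A B).det := by
  rw [← det_reindex_self (Equiv.prodSumDistrib _ _ _), comp_reindex_prodSumDistrib]
  rw [show comp _ _ _ _ ℝ ((hillTriangularForm m n A B).map toBlocks₂₁) = 0 from rfl,
    det_fromBlocks_zero₂₁]
  congr 1
  · exact (det_comp_neg_cyclicShift n).trans (by rw [Fintype.card_fin])
  · let e := (Equiv.addRight (1 : Fin n)).prodCongr (Equiv.refl (Fin m))
    exact det_submatrix_equiv_self e (hessian m n A B)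

end Hill

theorem hill_formula_discrete_general (m n : ℕ) [NeZero n]
    (A B : ℤ → Matrix (Fin m) (Fin m) ℝ)
    (hAper : ∀ i, A (i + n) = A i) (hBper : ∀ i, B (i + n) = B i)
    (hBinv : ∀ i, IsUnit (B i).det) :
    (monodromy m n A B - 1).det
      = (-1 : ℝ) ^ m * (hessian m n A B).det / ∏ i : Fin n, (B ((i : ℕ) : ℤ)).det := by
  have hT (k : ℕ) : IsUnit (transferMatrix m A B (k + 1)).det :=
    isUnit_det_transferMatrix hBinv _
  have hprod : ∏ i : Fin n, (B (i + 1)).det = ∏ i : Fin n, (B i).det := calc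
    _ = ∏ i : Fin n, (B ((i + 1 : Fin n) : ℕ)).det := by
      simp only [Function.Periodic.apply_fin_add_one hBper]
    _ = _ := Equiv.prod_comp (Equiv.addRight 1) fun i : Fin n => (B i).det
  have key := congrArg (fun M => (comp _ _ _ _ ℝ M).det)
    (hillReduction_mul_cyclicBidiagonal hAper hBper hBinv)
  simp only [comp_mul, det_mul, det_comp_hillReduction, det_comp_cyclicBidiagonal hT,
    det_comp_hillTriangularForm, ← monodromy_eq_leftProd, hprod] at key
  rw [eq_div_iff (Finset.prod_ne_zero_iff.2 fun i _ => (hBinv _).ne_zero), mul_comm, key]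

/-- **Hill's formula for discrete Lagrangian systems**:
`det(P - I) = (-1)^m · det H / ∏_{i=1}^n det B_i`. -/
theorem hill_formula_discrete (m n : ℕ) (hm : 0 < m) [NeZero n]
    (A B : ℤ → Matrix (Fin m) (Fin m) ℝ)
    (hAper : ∀ i, A (i + n) = A i) (hBper : ∀ i, B (i + n) = B i)
    (hAsym : ∀ i, (A i)ᵀ = A i) (hBinv : ∀ i, IsUnit (B i).det) :
    (monodromy m n A B - 1).det
      = (-1 : ℝ) ^ m * (hessian m n A B).det / ∏ i : Fin n, (B ((i : ℕ) : ℤ)).det :=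
  hill_formula_discrete_general m n A B hAper hBper hBinv
end

section
/- Discrete Noether theorem: if w is an infinitesimal symmetry of L, then the Noether function J is a first integral of the discrete Lagrangian system; that is, for all x, y, z ∈ ℝ^m with ∂₂L(x,y) + ∂₁L(y,z) = 0, one has J(x,y) = J(y,z). -/
/-- The Noether function `J(x,y) = ⟨∂₁L(x,y), w(x)⟩`, expressed as the directional
derivative of `L` in its first argument along `w(x)`. -/
noncomputable def noetherJ (m : ℕ) (L : (Fin m → ℝ) → (Fin m → ℝ) → ℝ)
    (w : (Fin m → ℝ) → (Fin m → ℝ)) (x y : Fin m → ℝ) : ℝ :=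
  fderiv ℝ (fun x' => L x' y) x (w x)

/-- **Discrete Noether theorem**: if `w` is an infinitesimal symmetry of `L`, then
the Noether function `J` is a first integral of the discrete Lagrangian system:
for every transition `∂₂L(x,y) + ∂₁L(y,z) = 0` one has `J(x,y) = J(y,z)`. -/
theorem discrete_noether (m : ℕ) (L : (Fin m → ℝ) → (Fin m → ℝ) → ℝ)
    (hL : ContDiff ℝ 1 (fun p : (Fin m → ℝ) × (Fin m → ℝ) => L p.1 p.2))
    (w : (Fin m → ℝ) → (Fin m → ℝ))
    (hsym : ∀ x y : Fin m → ℝ,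
      fderiv ℝ (fun x' => L x' y) x (w x) + fderiv ℝ (fun y' => L x y') y (w y) = 0)
    (x y z : Fin m → ℝ)
    (htrans : fderiv ℝ (fun y' => L x y') y + fderiv ℝ (fun x' => L x' z) y = 0) :
    noetherJ m L w x y = noetherJ m L w y z := by
  have h1 := hsym x y
  have h2 : (fderiv ℝ (fun y' => L x y') y + fderiv ℝ (fun x' => L x' z) y) (w y) = 0 := by
    rw [htrans]; rfl
  simp only [ContinuousLinearMap.add_apply] at h2
  simp only [noetherJ]
  linarith
end

section
/- The symmetry preserves its own Noether integral: if L is twice continuously differentiable, w : ℝ^m → ℝ^m is continuously differentiable and is an infinitesimal symmetry of L, then for all x, y ∈ ℝ^m the directional derivative of the Noether function J at (x,y) along the vector (w(x), w(y)) vanishes, i.e. ⟨∂_x J(x,y), w(x)⟩ + ⟨∂_y J(x,y), w(y)⟩ = 0. -/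
section PartialDerivatives

variable {𝕜 : Type*} [NontriviallyNormedField 𝕜]
  {E F G : Type*} [NormedAddCommGroup E] [NormedSpace 𝕜 E] [NormedAddCommGroup F]
  [NormedSpace 𝕜 F] [NormedAddCommGroup G] [NormedSpace 𝕜 G]
  {L : E → F → G} {x : E} {y : F}

theorem fderiv_partial_left (hL : DifferentiableAt 𝕜 (fun p : E × F => L p.1 p.2) (x, y)) :
    fderiv 𝕜 (fun a => L a y) x
      = (fderiv 𝕜 (fun p : E × F => L p.1 p.2) (x, y)).comp (.inl 𝕜 E F) :=
  (hL.hasFDerivAt.comp x (hasFDerivAt_prodMk_left (𝕜 := 𝕜) x y) :).fderiv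

theorem fderiv_partial_right (hL : DifferentiableAt 𝕜 (fun p : E × F => L p.1 p.2) (x, y)) :
    fderiv 𝕜 (fun b => L x b) y
      = (fderiv 𝕜 (fun p : E × F => L p.1 p.2) (x, y)).comp (.inr 𝕜 E F) :=
  (hL.hasFDerivAt.comp y (hasFDerivAt_prodMk_right (𝕜 := 𝕜) x y) :).fderiv

theorem fderiv_partial_left_partial_right_apply
    (hL : Differentiable 𝕜 (fun p : E × F => L p.1 p.2))
    (hL' : DifferentiableAt 𝕜 (fderiv 𝕜 (fun p : E × F => L p.1 p.2)) (x, y)) (u : E) (v : F) :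
    fderiv 𝕜 (fun a => fderiv 𝕜 (fun b => L a b) y v) x u
      = fderiv 𝕜 (fderiv 𝕜 (fun p : E × F => L p.1 p.2)) (x, y) (u, 0) (0, v) := by
  have hpartial : (fun a => fderiv 𝕜 (fun b => L a b) y v)
      = fun a => fderiv 𝕜 (fun p : E × F => L p.1 p.2) (a, y) (0, v) := by
    ext a
    simp [fderiv_partial_right (hL (a, y))]
  rw [hpartial, fderiv_clm_apply _ (differentiableAt_const _)]
  · simp [fderiv_partial_left (L := fun a b => fderiv 𝕜 (fun p : E × F => L p.1 p.2) (a, b)) hL']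
  · exact hL'.comp x (differentiableAt_id.prodMk (differentiableAt_const y))

theorem fderiv_partial_right_partial_left_apply
    (hL : Differentiable 𝕜 (fun p : E × F => L p.1 p.2))
    (hL' : DifferentiableAt 𝕜 (fderiv 𝕜 (fun p : E × F => L p.1 p.2)) (x, y)) (u : E) (v : F) :
    fderiv 𝕜 (fun b => fderiv 𝕜 (fun a => L a b) x u) y v
      = fderiv 𝕜 (fderiv 𝕜 (fun p : E × F => L p.1 p.2)) (x, y) (0, v) (u, 0) := by
  have hpartial : (fun b => fderiv 𝕜 (fun a => L a b) x u)
      = fun b => fderiv 𝕜 (fun p : E × F => L p.1 p.2) (x, b) (u, 0) := by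
    ext b
    simp [fderiv_partial_left (hL (x, b))]
  rw [hpartial, fderiv_clm_apply _ (differentiableAt_const _)]
  · simp [fderiv_partial_right (L := fun a b => fderiv 𝕜 (fun p : E × F => L p.1 p.2) (a, b)) hL']
  · exact hL'.comp y ((differentiableAt_const x).prodMk differentiableAt_id)

theorem fderiv_partial_comm [IsRCLikeNormedField 𝕜]
    (hL : ContDiff 𝕜 2 (fun p : E × F => L p.1 p.2)) (u : E) (v : F) :
    fderiv 𝕜 (fun a => fderiv 𝕜 (fun b => L a b) y v) x u
      = fderiv 𝕜 (fun b => fderiv 𝕜 (fun a => L a b) x u) y v := by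
  have hdiff : Differentiable 𝕜 (fun p : E × F => L p.1 p.2) := hL.differentiable (by simp)
  have hdiff' : DifferentiableAt 𝕜 (fderiv 𝕜 (fun p : E × F => L p.1 p.2)) (x, y) :=
    (hL.fderiv_right (m := 1) le_rfl).differentiable one_ne_zero (x, y)
  rw [fderiv_partial_left_partial_right_apply hdiff hdiff',
    fderiv_partial_right_partial_left_apply hdiff hdiff']
  exact hL.contDiffAt.isSymmSndFDerivAt (by simp) _ _

end PartialDerivatives

theorem symmetry_preserves_noether_general (m : ℕ) (L : (Fin m → ℝ) → (Fin m → ℝ) → ℝ)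
    (hL : ContDiff ℝ 2 (fun p : (Fin m → ℝ) × (Fin m → ℝ) => L p.1 p.2))
    (w : (Fin m → ℝ) → (Fin m → ℝ))
    (hsym : ∀ x y : Fin m → ℝ,
      fderiv ℝ (fun x' => L x' y) x (w x) + fderiv ℝ (fun y' => L x y') y (w y) = 0)
    (x y : Fin m → ℝ) :
    fderiv ℝ (fun x' => noetherJ m L w x' y) x (w x)
      + fderiv ℝ (fun y' => noetherJ m L w x y') y (w y) = 0 := by
  have hJ_left : (fun a => noetherJ m L w a y) = fun a => -fderiv ℝ (fun b => L a b) y (w y) :=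
    funext fun a => eq_neg_of_add_eq_zero_left (hsym a y)
  have hJ_right : (fun b => noetherJ m L w x b) = fun b => fderiv ℝ (fun a => L a b) x (w x) :=
    rfl
  rw [hJ_left, hJ_right, fderiv_fun_neg, neg_apply, fderiv_partial_comm hL,
    neg_add_cancel]

/-- **The symmetry preserves its own Noether integral**: if `w` is a `C¹`
infinitesimal symmetry of the `C²` Lagrangian `L`, then the directional derivative
of the Noether function `J` at `(x,y)` along `(w(x), w(y))` vanishes. -/
theorem symmetry_preserves_noether (m : ℕ) (L : (Fin m → ℝ) → (Fin m → ℝ) → ℝ)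
    (hL : ContDiff ℝ 2 (fun p : (Fin m → ℝ) × (Fin m → ℝ) => L p.1 p.2))
    (w : (Fin m → ℝ) → (Fin m → ℝ)) (hw : ContDiff ℝ 1 w)
    (hsym : ∀ x y : Fin m → ℝ,
      fderiv ℝ (fun x' => L x' y) x (w x) + fderiv ℝ (fun y' => L x y') y (w y) = 0)
    (x y : Fin m → ℝ) :
    fderiv ℝ (fun x' => noetherJ m L w x' y) x (w x)
      + fderiv ℝ (fun y' => noetherJ m L w x y') y (w y) = 0 :=
  symmetry_preserves_noether_general m L hL w hsym x y
end

section
/- Poincaré symplectic reduction: P maps W₀ into W₀ and V into V, hence induces a linear map P̃ on the quotient W̃ = W₀ / V, and for every ρ ∈ ℝ one has det(P − ρ·id_W) = (1 − ρ)^{2k} · det(P̃ − ρ·id_{W̃}). -/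
/-- The `ω`-orthogonal complement `W₀ = {u : ω(v,u) = 0 for all v ∈ V}`. -/
def omegaPerp (W : Type*) [AddCommGroup W] [Module ℝ W]
    (ω : W →ₗ[ℝ] W →ₗ[ℝ] ℝ) (V : Submodule ℝ W) : Submodule ℝ W where
  carrier := {u | ∀ v ∈ V, ω v u = 0}
  add_mem' := by
    intro a b ha hb v hv
    simp [map_add, ha v hv, hb v hv]
  zero_mem' := by
    intro v hv
    simp
  smul_mem' := by
    intro c a ha v hv
    simp [map_smul, ha v hv]

open Module

lemma det_restrict_mul_det_mapQ {K E : Type*} [Field K] [AddCommGroup E] [Module K E]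
    [FiniteDimensional K E] (p : Submodule K E) (f : E →ₗ[K] E)
    (hf : ∀ x ∈ p, f x ∈ p) :
    LinearMap.det f =
      LinearMap.det (f.restrict hf) *
        LinearMap.det (p.mapQ p f (fun x hx => hf x hx)) := by
  obtain ⟨q, hq⟩ := Submodule.exists_isCompl p
  set e := Submodule.prodEquivOfIsCompl p q hq with he
  let b₁ : Basis (Fin (finrank K p)) K p := finBasis K p
  let b₂ : Basis (Fin (finrank K q)) K q := finBasis K q
  let B : Basis (Fin (finrank K p) ⊕ Fin (finrank K q)) K E := (b₁.prod b₂).map e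
  let bq : Basis (Fin (finrank K q)) K (E ⧸ p) :=
    b₂.map (Submodule.quotientEquivOfIsCompl p q hq).symm
  -- repr facts
  have hrepr_inl : ∀ (x : E) (i), B.repr x (Sum.inl i) = b₁.repr (e.symm x).1 i := by
    intro x i
    simp [B, Basis.map_repr, Basis.prod_repr_inl]
  have hrepr_inr : ∀ (x : E) (i), B.repr x (Sum.inr i) = b₂.repr (e.symm x).2 i := by
    intro x i
    simp [B, Basis.map_repr, Basis.prod_repr_inr]
  have hmem_inr : ∀ (x : E), x ∈ p → ∀ i, B.repr x (Sum.inr i) = 0 := by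
    intro x hx i
    rw [hrepr_inr]
    have : e.symm x = ((⟨x, hx⟩ : p), 0) := Submodule.prodEquivOfIsCompl_symm_apply_left p q hq (⟨x, hx⟩ : p)
    rw [this]
    simp
  have hmem_inl : ∀ (x : E) (hx : x ∈ p) (i), B.repr x (Sum.inl i) = b₁.repr (⟨x, hx⟩ : p) i := by
    intro x hx i
    rw [hrepr_inl]
    have : e.symm x = ((⟨x, hx⟩ : p), 0) := Submodule.prodEquivOfIsCompl_symm_apply_left p q hq (⟨x, hx⟩ : p)
    rw [this]
  -- quotient repr fact
  have hq_repr : ∀ (x : E) (i),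
      bq.repr (Submodule.Quotient.mk x) i = B.repr x (Sum.inr i) := by
    intro x i
    have hx : x = ↑(e.symm x).1 + ↑(e.symm x).2 := by
      conv_lhs => rw [← e.apply_symm_apply x]
      rfl
    have hmk : (Submodule.Quotient.mk x : E ⧸ p) = Submodule.Quotient.mk ((e.symm x).2 : E) := by
      conv_lhs => rw [hx]
      rw [Submodule.Quotient.mk_add]
      rw [(Submodule.Quotient.mk_eq_zero _).2 (e.symm x).1.2, zero_add]
    rw [hmk, hrepr_inr]
    simp [bq, Basis.map_repr, Submodule.quotientEquivOfIsCompl_apply_mk_coe]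
  have hB_inl : ∀ j, B (Sum.inl j) = (b₁ j : E) := by
    intro j; simp [B, e, Submodule.coe_prodEquivOfIsCompl']
  have hB_inr : ∀ j, B (Sum.inr j) = (b₂ j : E) := by
    intro j; simp [B, e, Submodule.coe_prodEquivOfIsCompl']
  have hbq : ∀ j, bq j = Submodule.Quotient.mk (b₂ j : E) := by
    intro j; simp [bq, Submodule.quotientEquivOfIsCompl_symm_apply]
  set M := LinearMap.toMatrix B B f with hM
  have h21 : M.toBlocks₂₁ = 0 := by
    ext i j
    simp only [Matrix.toBlocks₂₁, Matrix.of_apply, Matrix.zero_apply, hM,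
      LinearMap.toMatrix_apply, hB_inl]
    exact hmem_inr _ (hf _ (b₁ j).2) i
  have h11 : M.toBlocks₁₁ = LinearMap.toMatrix b₁ b₁ (f.restrict hf) := by
    ext i j
    simp only [Matrix.toBlocks₁₁, Matrix.of_apply, hM, LinearMap.toMatrix_apply, hB_inl]
    rw [hmem_inl _ (hf _ (b₁ j).2) i]
    rfl
  have h22 : M.toBlocks₂₂ = LinearMap.toMatrix bq bq (p.mapQ p f (fun x hx => hf x hx)) := by
    ext i j
    simp only [Matrix.toBlocks₂₂, Matrix.of_apply, hM, LinearMap.toMatrix_apply, hB_inr, hbq,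
      Submodule.mapQ_apply]
    rw [hq_repr]
  rw [← LinearMap.det_toMatrix B f, ← LinearMap.det_toMatrix b₁ (f.restrict hf),
    ← LinearMap.det_toMatrix bq, ← h11, ← h22, ← hM,
    ← Matrix.fromBlocks_toBlocks M, h21]
  exact Matrix.det_fromBlocks_zero₂₁ _ _ _


/-- **Poincaré symplectic reduction**: a symplectic map `P` fixing pointwise an
isotropic `k`-dimensional subspace `V` preserves `W₀` and `V`, hence induces a
map `P̃` on `W̃ = W₀/V`, and
`det(P - ρ·id) = (1 - ρ)^{2k} · det(P̃ - ρ·id)` for all real `ρ`. -/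
theorem poincare_symplectic_reduction
    (W : Type*) [AddCommGroup W] [Module ℝ W] [FiniteDimensional ℝ W]
    (ω : W →ₗ[ℝ] W →ₗ[ℝ] ℝ)
    (halt : ∀ u, ω u u = 0)
    (hnd : ∀ u, (∀ v, ω u v = 0) → u = 0)
    (P : W →ₗ[ℝ] W)
    (hP : ∀ u v, ω (P u) (P v) = ω u v)
    (V : Submodule ℝ W) (k : ℕ) (hk : Module.finrank ℝ V = k)
    (hVfix : ∀ v ∈ V, P v = v)
    (hViso : ∀ v ∈ V, ∀ v' ∈ V, ω v v' = 0) :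
    (∀ u ∈ omegaPerp W ω V, P u ∈ omegaPerp W ω V) ∧
    (∀ v ∈ V, P v ∈ V) ∧
    ∃ Pt : (↥(omegaPerp W ω V) ⧸ V.comap (omegaPerp W ω V).subtype) →ₗ[ℝ]
           (↥(omegaPerp W ω V) ⧸ V.comap (omegaPerp W ω V).subtype),
      (∀ (u : ↥(omegaPerp W ω V)) (h : P ↑u ∈ omegaPerp W ω V),
        Pt (Submodule.Quotient.mk u) = Submodule.Quotient.mk ⟨P ↑u, h⟩) ∧
      ∀ ρ : ℝ,
        LinearMap.det (P - ρ • (LinearMap.id : W →ₗ[ℝ] W)) =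
          (1 - ρ) ^ (2 * k) * LinearMap.det (Pt - ρ • LinearMap.id) := by
  classical
  set W₀ := omegaPerp W ω V with hW₀def
  -- skew-symmetry
  have hskew : ∀ u v, ω u v = -ω v u := by
    intro u v
    have h := halt (u + v)
    simp only [map_add, LinearMap.add_apply, halt] at h
    linarith
  -- P preserves W₀
  have hPW₀ : ∀ u ∈ W₀, P u ∈ W₀ := by
    intro u hu v hv
    calc ω v (P u) = ω (P v) (P u) := by rw [hVfix v hv]
    _ = ω v u := hP v u
    _ = 0 := hu v hv
  -- P preserves V
  have hPV : ∀ v ∈ V, P v ∈ V := by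
    intro v hv; rw [hVfix v hv]; exact hv
  -- V ⊆ W₀
  have hVle : V ≤ W₀ := fun v hv v' hv' => hViso v' hv' v hv
  -- P u - u ∈ W₀ for all u
  have hPu : ∀ u, P u - u ∈ W₀ := by
    intro u v hv
    have : ω v (P u) = ω v u := by
      calc ω v (P u) = ω (P v) (P u) := by rw [hVfix v hv]
      _ = ω v u := hP v u
    simp [map_sub, this]
  -- finrank of the quotient W ⧸ W₀ is k
  have hquot : Module.finrank ℝ (W ⧸ W₀) = k := by
    set φ : W →ₗ[ℝ] Module.Dual ℝ V := V.subtype.dualMap ∘ₗ ω.flip with hφ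
    have hker : LinearMap.ker φ = W₀ := by
      ext u
      constructor
      · intro hu v hv
        have := LinearMap.congr_fun (LinearMap.mem_ker.mp hu) ⟨v, hv⟩
        simpa [φ] using this
      · intro hu
        rw [LinearMap.mem_ker]
        ext v
        simpa [φ] using hu v v.2
    have hflip_inj : Function.Injective (ω.flip) := by
      rw [← LinearMap.ker_eq_bot]
      ext u
      simp only [LinearMap.mem_ker, Submodule.mem_bot]
      constructor
      · intro hu
        apply hnd
        intro v
        rw [hskew]
        have := LinearMap.congr_fun hu v
        simpa using this
      · rintro rfl; simp
    have hflip_surj : Function.Surjective (ω.flip : W →ₗ[ℝ] Module.Dual ℝ W) := by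
      have : Module.finrank ℝ W = Module.finrank ℝ (Module.Dual ℝ W) :=
        (Subspace.dual_finrank_eq).symm
      exact (LinearMap.injective_iff_surjective_of_finrank_eq_finrank this).mp hflip_inj
    have hφsurj : Function.Surjective φ :=
      (LinearMap.dualMap_surjective_of_injective V.injective_subtype).comp hflip_surj
    calc Module.finrank ℝ (W ⧸ W₀) = Module.finrank ℝ (W ⧸ LinearMap.ker φ) := by rw [hker]
    _ = Module.finrank ℝ (LinearMap.range φ) := (φ.quotKerEquivRange).finrank_eq
    _ = Module.finrank ℝ (Module.Dual ℝ V) := by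
        rw [LinearMap.range_eq_top.mpr hφsurj]; exact finrank_top ℝ _
    _ = Module.finrank ℝ V := Subspace.dual_finrank_eq
    _ = k := hk
  set V' := V.comap W₀.subtype with hV'def
  have hV'rank : Module.finrank ℝ V' = k := by
    rw [← hk]
    exact (Submodule.comapSubtypeEquivOfLe hVle).finrank_eq
  -- the restriction of P to W₀
  have hPW₀' : ∀ x : W₀, P ↑x ∈ W₀ := fun x => hPW₀ x x.2
  set P₀ : W₀ →ₗ[ℝ] W₀ := P.restrict (fun x hx => hPW₀ x hx) with hP₀def
  have hP₀V' : ∀ x ∈ V', P₀ x ∈ V' := by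
    intro x hx
    have : P (↑x : W) ∈ V := hPV _ hx
    simpa [V', hP₀def, LinearMap.restrict_apply] using this
  set Pt : (W₀ ⧸ V') →ₗ[ℝ] (W₀ ⧸ V') := V'.mapQ V' P₀ (fun x hx => hP₀V' x hx) with hPtdef
  refine ⟨hPW₀, hPV, Pt, ?_, ?_⟩
  · intro u h
    rw [hPtdef, Submodule.mapQ_apply]
    rfl
  · intro ρ
    set f : W →ₗ[ℝ] W := P - ρ • LinearMap.id with hfdef
    have hfW₀ : ∀ x ∈ W₀, f x ∈ W₀ := by
      intro x hx
      simp only [hfdef, LinearMap.sub_apply, LinearMap.smul_apply, LinearMap.id_apply]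
      exact sub_mem (hPW₀ x hx) (Submodule.smul_mem _ _ hx)
    -- first reduction : W₀ ≤ W
    have step1 : LinearMap.det f =
        LinearMap.det (f.restrict hfW₀) *
          LinearMap.det (W₀.mapQ W₀ f (fun x hx => hfW₀ x hx)) :=
      det_restrict_mul_det_mapQ W₀ f hfW₀
    have hmapQ1 : W₀.mapQ W₀ f (fun x hx => hfW₀ x hx) =
        (1 - ρ) • (LinearMap.id : (W ⧸ W₀) →ₗ[ℝ] (W ⧸ W₀)) := by
      apply Submodule.linearMap_qext
      ext u
      simp only [LinearMap.comp_apply, Submodule.mkQ_apply, Submodule.mapQ_apply,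
        LinearMap.smul_apply, LinearMap.id_apply]
      rw [← Submodule.Quotient.mk_smul, Submodule.Quotient.eq]
      have : f u - (1 - ρ) • u = P u - u := by
        simp only [hfdef, LinearMap.sub_apply, LinearMap.smul_apply, LinearMap.id_apply]
        module
      rw [this]
      exact hPu u
    have hdet1 : LinearMap.det (W₀.mapQ W₀ f (fun x hx => hfW₀ x hx)) = (1 - ρ) ^ k := by
      rw [hmapQ1, LinearMap.det_smul, LinearMap.det_id, mul_one, hquot]
    -- second reduction : V' ≤ W₀
    set g : W₀ →ₗ[ℝ] W₀ := f.restrict hfW₀ with hgdef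
    have hgV' : ∀ x ∈ V', g x ∈ V' := by
      intro x hx
      have h1 : P (↑x : W) ∈ V := hPV _ hx
      have : (↑(g x) : W) = P ↑x - ρ • ↑x := by
        simp [hgdef, hfdef, LinearMap.restrict_apply]
      simp only [V', Submodule.mem_comap, Submodule.coe_subtype, this]
      exact sub_mem h1 (Submodule.smul_mem _ _ hx)
    have step2 : LinearMap.det g =
        LinearMap.det (g.restrict hgV') *
          LinearMap.det (V'.mapQ V' g (fun x hx => hgV' x hx)) :=
      det_restrict_mul_det_mapQ V' g hgV'
    have hrestr2 : g.restrict hgV' = (1 - ρ) • (LinearMap.id : V' →ₗ[ℝ] V') := by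
      ext x
      have hx : P (↑(↑x : W₀) : W) = ↑(↑x : W₀) := hVfix _ x.2
      simp only [LinearMap.restrict_apply, LinearMap.smul_apply, LinearMap.id_apply,
        hgdef, hfdef, LinearMap.sub_apply, SetLike.val_smul, Submodule.coe_smul, hx,
        sub_smul, one_smul]
      push_cast
      abel
    have hdet2 : LinearMap.det (g.restrict hgV') = (1 - ρ) ^ k := by
      rw [hrestr2, LinearMap.det_smul, LinearMap.det_id, mul_one, hV'rank]
    have hmapQ2 : V'.mapQ V' g (fun x hx => hgV' x hx) =
        Pt - ρ • LinearMap.id := by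
      apply Submodule.linearMap_qext
      ext x
      simp only [LinearMap.comp_apply, Submodule.mkQ_apply, Submodule.mapQ_apply,
        LinearMap.sub_apply, LinearMap.smul_apply, LinearMap.id_apply, hPtdef]
      rw [← Submodule.Quotient.mk_smul, ← Submodule.Quotient.mk_sub]
      congr 1
    calc LinearMap.det f
        = LinearMap.det g * (1 - ρ) ^ k := by rw [step1, hdet1, hgdef]
      _ = ((1 - ρ) ^ k * LinearMap.det (V'.mapQ V' g (fun x hx => hgV' x hx))) * (1 - ρ) ^ k := by
          rw [step2, hdet2]
      _ = (1 - ρ) ^ (2 * k) * LinearMap.det (Pt - ρ • LinearMap.id) := by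
          rw [hmapQ2]; ring
end

section
/- Routh reduction for linear discrete Lagrangian systems: let (u_i)_{i∈ℤ} be a solution of the variational system such that I_i^α(u_i, u_{i+1}) = 0 for all i and all α = 1, …, k, and set v_i = Π_i u_i ∈ E_i^⊥. Then v is a trajectory of the reduced system; explicitly, for every i and every φ ∈ E_i^⊥, (A_i v_i − B_{i−1} v_{i−1} − B_iᵀ v_{i+1}) · φ = Σ_{α,β} g_{αβ,i} ((B_i v_i) · w_{i+1}^α) ((B_i φ) · w_{i+1}^β). -/
open Matrix BigOperators

private lemma sum_dotProduct' {k m : ℕ} (f : Fin k → Fin m → ℝ) (y : Fin m → ℝ) :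
    (∑ x : Fin k, f x) ⬝ᵥ y = ∑ x : Fin k, f x ⬝ᵥ y := by
  simp [dotProduct, Finset.sum_mul]
  rw [Finset.sum_comm]

/-- **Routh reduction for linear discrete Lagrangian systems.**
If `(u_i)` solves the variational system with all first integrals
`I_i^α(u_i, u_{i+1}) = 0`, then the projections `v_i = Π_i u_i` form a trajectory
of the reduced system: for every test vector `φ ∈ E_i^⊥`,
`(A_i v_i - B_{i-1} v_{i-1} - B_iᵀ v_{i+1}) · φ
  = Σ_{α,β} g_{αβ,i} ((B_i v_i)·w_{i+1}^α)((B_i φ)·w_{i+1}^β)`. -/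
theorem routh_reduction_discrete (m n k : ℕ) (hm : 1 ≤ m) (hn : 1 ≤ n)
    (hk1 : 1 ≤ k) (hkm : k ≤ m)
    (A B : ℤ → Matrix (Fin m) (Fin m) ℝ)
    (hAper : ∀ i, A (i + n) = A i) (hBper : ∀ i, B (i + n) = B i)
    (hAsym : ∀ i, (A i)ᵀ = A i) (hBinv : ∀ i, IsUnit (B i).det)
    -- the `n`-periodic solutions `w^1, …, w^k` of the variational system
    (w : Fin k → ℤ → (Fin m → ℝ))
    (hwper : ∀ α i, w α (i + n) = w α i)
    (hwsol : ∀ α i,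
      A i *ᵥ w α i - B (i - 1) *ᵥ w α (i - 1) - (B i)ᵀ *ᵥ w α (i + 1) = 0)
    -- isotropy
    (hiso : ∀ i α β, (B i *ᵥ w α i) ⬝ᵥ w β (i + 1) = (B i *ᵥ w β i) ⬝ᵥ w α (i + 1))
    -- the matrices `G_i` and their invertibility
    (G : ℤ → Matrix (Fin k) (Fin k) ℝ)
    (hG : ∀ i α β, G i α β = (B i *ᵥ w α i) ⬝ᵥ w β (i + 1))
    (hGinv : ∀ i, IsUnit (G i).det)
    -- a solution `u` of the variational system with vanishing first integrals
    (u : ℤ → Fin m → ℝ)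
    (husol : ∀ i, A i *ᵥ u i - B (i - 1) *ᵥ u (i - 1) - (B i)ᵀ *ᵥ u (i + 1) = 0)
    (hI : ∀ i α, (B i *ᵥ w α i) ⬝ᵥ u (i + 1) - (B i *ᵥ u i) ⬝ᵥ w α (i + 1) = 0)
    -- the projected sequence `v_i = Π_i u_i`
    (v : ℤ → Fin m → ℝ)
    (hv : ∀ i, v i = u i -
      ∑ α : Fin k, ∑ β : Fin k,
        ((G (i - 1))⁻¹ α β * ((B (i - 1) *ᵥ w α (i - 1)) ⬝ᵥ u i)) • w β i) :
    ∀ i, ∀ φ : Fin m → ℝ, (∀ α, (B (i - 1) *ᵥ w α (i - 1)) ⬝ᵥ φ = 0) →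
      (A i *ᵥ v i - B (i - 1) *ᵥ v (i - 1) - (B i)ᵀ *ᵥ v (i + 1)) ⬝ᵥ φ
        = ∑ α : Fin k, ∑ β : Fin k,
            (G i)⁻¹ α β * ((B i *ᵥ v i) ⬝ᵥ w α (i + 1)) * ((B i *ᵥ φ) ⬝ᵥ w β (i + 1)) := by
  intro i φ hφ
  -- the coefficients of the projection
  set c : ℤ → Fin k → ℝ :=
    fun j β => ∑ α, (G (j-1))⁻¹ α β * ((B (j-1) *ᵥ w α (j-1)) ⬝ᵥ u j) with hc
  have hv' : ∀ j, v j = u j - ∑ β, c j β • w β j := by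
    intro j
    rw [hv j, Finset.sum_comm]
    congr 1
    refine Finset.sum_congr rfl fun β _ => ?_
    rw [hc, Finset.sum_smul]
  -- basic dot-product transfer
  have hdot : ∀ (M : Matrix (Fin m) (Fin m) ℝ) (x y : Fin m → ℝ),
      (M *ᵥ x) ⬝ᵥ y = x ⬝ᵥ (Mᵀ *ᵥ y) := by
    intro M x y
    rw [Matrix.dotProduct_mulVec, Matrix.vecMul_transpose, dotProduct_comm]
  -- expansion of dot products against `v`
  have expand : ∀ (M : Matrix (Fin m) (Fin m) ℝ) (j : ℤ) (y : Fin m → ℝ),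
      (M *ᵥ v j) ⬝ᵥ y = (M *ᵥ u j) ⬝ᵥ y - ∑ β, c j β * ((M *ᵥ w β j) ⬝ᵥ y) := by
    intro M j y
    rw [hdot, hv' j, sub_dotProduct, sum_dotProduct']
    simp only [smul_dotProduct, smul_eq_mul, hdot]
  -- `G i * (G i)⁻¹ = 1` entrywise
  have hinv : ∀ (j : ℤ) (γ β : Fin k),
      ∑ α, G j γ α * (G j)⁻¹ α β = if γ = β then 1 else 0 := by
    intro j γ β
    have h := Matrix.mul_nonsing_inv (G j) (hGinv j)
    have h2 := congrFun (congrFun h γ) β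
    simpa [Matrix.mul_apply, Matrix.one_apply] using h2
  -- solutions rearranged
  have hw' : ∀ α, A i *ᵥ w α i = B (i-1) *ᵥ w α (i-1) + (B i)ᵀ *ᵥ w α (i+1) := by
    intro α
    have h := hwsol α i
    rwa [sub_sub, sub_eq_zero] at h
  have hu' : A i *ᵥ u i = B (i-1) *ᵥ u (i-1) + (B i)ᵀ *ᵥ u (i+1) := by
    have h := husol i
    rwa [sub_sub, sub_eq_zero] at h
  -- abbreviation for the test pairing
  set D : Fin k → ℝ := fun β => ((B i)ᵀ *ᵥ w β (i+1)) ⬝ᵥ φ with hD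
  have hDφ : ∀ β, (B i *ᵥ φ) ⬝ᵥ w β (i+1) = D β := by
    intro β
    rw [hD, hdot, dotProduct_comm]
  -- compute the left-hand side
  have hLHS : (A i *ᵥ v i - B (i - 1) *ᵥ v (i - 1) - (B i)ᵀ *ᵥ v (i + 1)) ⬝ᵥ φ
      = ∑ β, (c (i+1) β - c i β) * D β := by
    rw [sub_dotProduct, sub_dotProduct, expand, expand, expand]
    have e1 : (A i *ᵥ u i) ⬝ᵥ φ
        = (B (i-1) *ᵥ u (i-1)) ⬝ᵥ φ + ((B i)ᵀ *ᵥ u (i+1)) ⬝ᵥ φ := by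
      rw [hu', add_dotProduct]
    have e2 : ∀ β, (A i *ᵥ w β i) ⬝ᵥ φ = D β := by
      intro β
      rw [hw' β, add_dotProduct, hφ β, zero_add]
    have e3 : ∀ β, ((B i)ᵀ *ᵥ w β (i+1)) ⬝ᵥ φ = D β := fun β => rfl
    simp only [e1, e2, e3, hφ, mul_zero, Finset.sum_const_zero, sub_zero]
    simp only [sub_mul, Finset.sum_sub_distrib]
    ring
  rw [hLHS]
  -- compute the right-hand side
  have key : ∀ β, ∑ α, (G i)⁻¹ α β * ((B i *ᵥ v i) ⬝ᵥ w α (i+1))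
      = c (i+1) β - c i β := by
    intro β
    have hX : ∀ α, (B i *ᵥ v i) ⬝ᵥ w α (i+1)
        = (B i *ᵥ u i) ⬝ᵥ w α (i+1) - ∑ γ, c i γ * G i γ α := by
      intro α
      rw [expand]
      congr 1
      refine Finset.sum_congr rfl fun γ _ => ?_
      rw [hG i γ α]
    have hc1 : c (i+1) β = ∑ α, (G i)⁻¹ α β * ((B i *ᵥ u i) ⬝ᵥ w α (i+1)) := by
      rw [hc]
      simp only [add_sub_cancel_right]
      refine Finset.sum_congr rfl fun α _ => ?_
      have h := hI i α
      rw [sub_eq_zero] at h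
      rw [h]
    simp only [hX, mul_sub]
    rw [Finset.sum_sub_distrib, ← hc1]
    congr 1
    simp only [Finset.mul_sum]
    rw [Finset.sum_comm]
    have : ∀ γ, ∑ α, (G i)⁻¹ α β * (c i γ * G i γ α) = c i γ * (if γ = β then 1 else 0) := by
      intro γ
      rw [← hinv i γ β, Finset.mul_sum]
      refine Finset.sum_congr rfl fun α _ => by ring
    simp only [this, mul_ite, mul_one, mul_zero]
    simp [Finset.sum_ite_eq' Finset.univ β (c i)]
  calc ∑ β, (c (i+1) β - c i β) * D β
      = ∑ β, (∑ α, (G i)⁻¹ α β * ((B i *ᵥ v i) ⬝ᵥ w α (i+1))) * D β := by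
        refine Finset.sum_congr rfl fun β _ => ?_
        rw [key β]
    _ = ∑ α, ∑ β, (G i)⁻¹ α β * ((B i *ᵥ v i) ⬝ᵥ w α (i + 1)) * ((B i *ᵥ φ) ⬝ᵥ w β (i + 1)) := by
        rw [Finset.sum_comm]
        refine Finset.sum_congr rfl fun β _ => ?_
        rw [Finset.sum_mul]
        refine Finset.sum_congr rfl fun α _ => ?_
        rw [hDφ β]
end

section
/- (i) h(u, v) = 0 for every u ∈ Y and every v ∈ Z; (ii) conversely, if u ∈ X satisfies h(u, v) = 0 for all v ∈ Z, then u ∈ Y (Y is the h-orthogonal complement of Z); (iii) for v ∈ Z written as v_i = Σ_α λ_{α,i} w_i^α, the restriction of h to Z is h(v, v) = Σ_{i=1}^n Σ_{α,β} g_i^{αβ} (λ_{α,i+1} − λ_{α,i})(λ_{β,i+1} − λ_{β,i}), where λ_{α,n+1} = λ_{α,1}. -/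
open Matrix BigOperators

/-- The Hessian bilinear form
`h(u,v) = Σ_i (A_i u_i - B_{i-1} u_{i-1} - B_iᵀ u_{i+1}) · v_i` (cyclic). -/
noncomputable def hForm (m n : ℕ) [NeZero n] (A B : ℤ → Matrix (Fin m) (Fin m) ℝ)
    (u v : Fin n → Fin m → ℝ) : ℝ :=
  ∑ i : Fin n,
    (A ((i : ℕ) : ℤ) *ᵥ u i - B (((i : ℕ) : ℤ) - 1) *ᵥ u (i - 1)
      - (B ((i : ℕ) : ℤ))ᵀ *ᵥ u (i + 1)) ⬝ᵥ v i

/-- `u ∈ Y`: each first integral `I_i^α(u_i, u_{i+1})` takes the same value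
for all `i`. -/
def memY (m n k : ℕ) [NeZero n] (B : ℤ → Matrix (Fin m) (Fin m) ℝ)
    (w : Fin k → ℤ → (Fin m → ℝ)) (u : Fin n → Fin m → ℝ) : Prop :=
  ∀ α : Fin k, ∀ i j : Fin n,
    (B ((i : ℕ) : ℤ) *ᵥ w α ((i : ℕ) : ℤ)) ⬝ᵥ u (i + 1)
        - (B ((i : ℕ) : ℤ) *ᵥ u i) ⬝ᵥ w α (((i : ℕ) : ℤ) + 1)
      = (B ((j : ℕ) : ℤ) *ᵥ w α ((j : ℕ) : ℤ)) ⬝ᵥ u (j + 1)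
        - (B ((j : ℕ) : ℤ) *ᵥ u j) ⬝ᵥ w α (((j : ℕ) : ℤ) + 1)

/-! Pairing the variational operator of `u` at site `i` with a solution `w` gives the discrete
Lagrange identity `(Lu)_i · w_i = I_{i-1}(u_{i-1}, u_i) - I_i(u_i, u_{i+1})`. Hence
`h(u, Σ_α λ_α w^α) = Σ_{α,i} λ_{α,i} (I^α_{i-1} - I^α_i)`, which vanishes for all `λ` exactly
when every `I^α` is constant along the cycle: this gives (i), and (ii) by taking for `λ` a
Kronecker delta. For (iii), summation by parts on the cycle rewrites it as
`Σ_{α,i} I^α_i(v) (λ_{α,i+1} - λ_{α,i})`, and isotropy gives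
`I^α_i(v) = Σ_β g_i^{αβ} (λ_{β,i+1} - λ_{β,i})`. -/

open Function

theorem Function.Periodic.map_emod {X : Type*} {f : ℤ → X} {c : ℤ} (h : Periodic f c) (x : ℤ) :
    f (x % c) = f x := by
  rw [Int.emod_def, mul_comm, ← smul_eq_mul, h.sub_zsmul_eq]

section FinPeriodic

variable {X : Type*} {n : ℕ} [NeZero n] {f : ℤ → X}

theorem Function.Periodic.apply_fin_add_one_s11 (h : Periodic f n) (i : Fin n) :
    f ((i + 1 : Fin n) : ℕ) = f ((i : ℕ) + 1) := by
  rw [← h.map_emod ((i : ℕ) + 1), Fin.val_add]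
  simp

theorem Function.Periodic.apply_fin_sub_one (h : Periodic f n) (i : Fin n) :
    f ((i - 1 : Fin n) : ℕ) = f ((i : ℕ) - 1) := by
  simpa only [sub_add_cancel, add_sub_cancel_right] using
    ((h.sub_const 1).apply_fin_add_one_s11 (i - 1)).symm

theorem Fin.apply_eq_apply_of_apply_sub_one_eq {F : Fin n → X} (h : ∀ i, F (i - 1) = F i)
    (i j : Fin n) : F i = F j := by
  suffices hzero : ∀ t (ht : t < n), F ⟨t, ht⟩ = F 0 from
    (hzero i i.isLt).trans (hzero j j.isLt).symm
  intro t
  induction t with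
  | zero => intro _; rfl
  | succ t ih =>
    intro ht
    have hsucc : (⟨t + 1, ht⟩ : Fin n) = ⟨t, by omega⟩ + 1 := by
      ext
      simp [Fin.val_add, Nat.mod_eq_of_lt ht]
    rw [← ih (by omega), hsucc, ← h, add_sub_cancel_right]

end FinPeriodic

theorem Fintype.sum_mul_sub_shift {G R : Type*} [AddCommGroup G] [Fintype G] [CommRing R]
    (c F : G → R) (g : G) :
    ∑ i, c i * (F (i - g) - F i) = ∑ i, F i * (c (i + g) - c i) := by
  have hshift : ∑ i, c i * F (i - g) = ∑ i, c (i + g) * F i := by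
    rw [← Equiv.sum_comp (Equiv.addRight g)]
    simp only [Equiv.coe_addRight, add_sub_cancel_right]
  simp only [mul_sub, Finset.sum_sub_distrib, hshift, mul_comm]

section FirstIntegral

variable {m : ℕ} (B : ℤ → Matrix (Fin m) (Fin m) ℝ) (w : ℤ → Fin m → ℝ)

def firstIntegral (i : ℤ) (x y : Fin m → ℝ) : ℝ :=
  (B i *ᵥ w i) ⬝ᵥ y - (B i *ᵥ x) ⬝ᵥ w (i + 1)

theorem firstIntegral_periodic {n : ℕ} (hB : Periodic B n) (hw : Periodic w n) (x y : Fin m → ℝ) :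
    Periodic (fun i => firstIntegral B w i x y) n := fun i => by
  simp only [firstIntegral, add_right_comm i (n : ℤ) 1, hB i, hw i, hw (i + 1)]

/-- Discrete Lagrange identity. -/
theorem variational_dotProduct_solution (A : ℤ → Matrix (Fin m) (Fin m) ℝ) (i : ℤ)
    (hA : (A i)ᵀ = A i)
    (hw : A i *ᵥ w i - B (i - 1) *ᵥ w (i - 1) - (B i)ᵀ *ᵥ w (i + 1) = 0) (x y z : Fin m → ℝ) :
    (A i *ᵥ y - B (i - 1) *ᵥ x - (B i)ᵀ *ᵥ z) ⬝ᵥ w i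
      = firstIntegral B w (i - 1) x y - firstIntegral B w i y z := by
  have hAw : A i *ᵥ w i = B (i - 1) *ᵥ w (i - 1) + (B i)ᵀ *ᵥ w (i + 1) := by
    rw [← sub_eq_zero, ← hw, sub_sub]
  have hAy : (A i *ᵥ y) ⬝ᵥ w i = (B (i - 1) *ᵥ w (i - 1)) ⬝ᵥ y + (B i *ᵥ y) ⬝ᵥ w (i + 1) := by
    rw [dotProduct_comm, ← hA, dotProduct_transpose_mulVec, hAw,
      dotProduct_add, dotProduct_transpose_mulVec, dotProduct_comm y, dotProduct_comm (w (i + 1))]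
  have hBz : ((B i)ᵀ *ᵥ z) ⬝ᵥ w i = (B i *ᵥ w i) ⬝ᵥ z := by
    rw [dotProduct_comm, dotProduct_transpose_mulVec, dotProduct_comm]
  simp only [firstIntegral, sub_dotProduct, hAy, hBz, sub_add_cancel]
  ring

theorem firstIntegral_sum_smul {ι : Type*} [Fintype ι] (w : ι → ℤ → Fin m → ℝ) (i : ℤ)
    (hiso : ∀ α β, (B i *ᵥ w α i) ⬝ᵥ w β (i + 1) = (B i *ᵥ w β i) ⬝ᵥ w α (i + 1))
    (a b : ι → ℝ) (α : ι) :
    firstIntegral B (w α) i (∑ β, a β • w β i) (∑ β, b β • w β (i + 1))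
      = ∑ β, (B i *ᵥ w α i) ⬝ᵥ w β (i + 1) * (b β - a β) := by
  rw [firstIntegral, dotProduct_sum, mulVec_sum, sum_dotProduct, ← Finset.sum_sub_distrib]
  refine Finset.sum_congr rfl fun β _ => ?_
  rw [mulVec_smul, smul_dotProduct, dotProduct_smul, hiso β α, smul_eq_mul, smul_eq_mul]
  ring

end FirstIntegral

section HessianForm

variable {m n : ℕ} [NeZero n] (A B : ℤ → Matrix (Fin m) (Fin m) ℝ)

def firstIntegralSeq (w : ℤ → Fin m → ℝ) (u : Fin n → Fin m → ℝ) (i : Fin n) : ℝ :=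
  firstIntegral B w i (u i) (u (i + 1))

theorem memY_iff {k : ℕ} (w : Fin k → ℤ → Fin m → ℝ) (u : Fin n → Fin m → ℝ) :
    memY m n k B w u ↔ ∀ α i j, firstIntegralSeq B (w α) u i = firstIntegralSeq B (w α) u j :=
  Iff.rfl

theorem hForm_sum_right {ι : Type*} (s : Finset ι) (u : Fin n → Fin m → ℝ)
    (v : ι → Fin n → Fin m → ℝ) :
    hForm m n A B u (fun i => ∑ a ∈ s, v a i) = ∑ a ∈ s, hForm m n A B u (v a) := by
  simp only [hForm, dotProduct_sum]
  exact Finset.sum_comm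

theorem hForm_smul_solution (w : ℤ → Fin m → ℝ) (hA : ∀ i, (A i)ᵀ = A i)
    (hB : Periodic B n) (hw : Periodic w n)
    (hsol : ∀ i, A i *ᵥ w i - B (i - 1) *ᵥ w (i - 1) - (B i)ᵀ *ᵥ w (i + 1) = 0)
    (u : Fin n → Fin m → ℝ) (c : Fin n → ℝ) :
    hForm m n A B u (fun i => c i • w ((i : ℕ) : ℤ))
      = ∑ i, c i * (firstIntegralSeq B w u (i - 1) - firstIntegralSeq B w u i) := by
  refine Finset.sum_congr rfl fun i _ => ?_
  rw [dotProduct_smul, variational_dotProduct_solution B w A _ (hA _) (hsol _), smul_eq_mul]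
  congr 2
  rw [firstIntegralSeq, sub_add_cancel]
  exact ((firstIntegral_periodic B w hB hw _ _).apply_fin_sub_one i).symm

theorem hForm_sum_smul_solutions {ι : Type*} [Fintype ι] (w : ι → ℤ → Fin m → ℝ)
    (hA : ∀ i, (A i)ᵀ = A i) (hB : Periodic B n) (hw : ∀ α, Periodic (w α) n)
    (hsol : ∀ α i,
      A i *ᵥ w α i - B (i - 1) *ᵥ w α (i - 1) - (B i)ᵀ *ᵥ w α (i + 1) = 0)
    (u : Fin n → Fin m → ℝ) (lam : ι → Fin n → ℝ) :
    hForm m n A B u (fun i => ∑ α, lam α i • w α ((i : ℕ) : ℤ))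
      = ∑ α, ∑ i, lam α i
          * (firstIntegralSeq B (w α) u (i - 1) - firstIntegralSeq B (w α) u i) :=
  (hForm_sum_right A B _ u fun α i => lam α i • w α ((i : ℕ) : ℤ)).trans <|
    Finset.sum_congr rfl fun α _ => hForm_smul_solution A B (w α) hA hB (hw α) (hsol α) u (lam α)

theorem firstIntegralSeq_sum_smul {ι : Type*} [Fintype ι] (w : ι → ℤ → Fin m → ℝ)
    (hw : ∀ α, Periodic (w α) n)
    (hiso : ∀ i α β, (B i *ᵥ w α i) ⬝ᵥ w β (i + 1) = (B i *ᵥ w β i) ⬝ᵥ w α (i + 1))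
    (lam : ι → Fin n → ℝ) (α : ι) (i : Fin n) :
    firstIntegralSeq B (w α) (fun i => ∑ β, lam β i • w β ((i : ℕ) : ℤ)) i
      = ∑ β, (B i *ᵥ w α i) ⬝ᵥ w β (i + 1) * (lam β (i + 1) - lam β i) := by
  simp only [firstIntegralSeq, (hw _).apply_fin_add_one_s11]
  exact firstIntegral_sum_smul B w _ (hiso _) _ _ α

end HessianForm

theorem hessian_orthogonality_general (m n k : ℕ)
    [NeZero n]
    (A B : ℤ → Matrix (Fin m) (Fin m) ℝ)
    (hBper : ∀ i, B (i + n) = B i)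
    (hAsym : ∀ i, (A i)ᵀ = A i)
    (w : Fin k → ℤ → (Fin m → ℝ))
    (hwper : ∀ α i, w α (i + n) = w α i)
    (hwsol : ∀ α i,
      A i *ᵥ w α i - B (i - 1) *ᵥ w α (i - 1) - (B i)ᵀ *ᵥ w α (i + 1) = 0)
    (hiso : ∀ i α β,
      (B i *ᵥ w α i) ⬝ᵥ w β (i + 1) = (B i *ᵥ w β i) ⬝ᵥ w α (i + 1)) :
    -- (i)
    (∀ u : Fin n → Fin m → ℝ, memY m n k B w u →
      ∀ lam : Fin k → Fin n → ℝ,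
        hForm m n A B u (fun i => ∑ α : Fin k, lam α i • w α ((i : ℕ) : ℤ)) = 0) ∧
    -- (ii)
    (∀ u : Fin n → Fin m → ℝ,
      (∀ v : Fin n → Fin m → ℝ,
        (∃ lam : Fin k → Fin n → ℝ,
          ∀ i, v i = ∑ α : Fin k, lam α i • w α ((i : ℕ) : ℤ)) →
        hForm m n A B u v = 0) →
      memY m n k B w u) ∧
    -- (iii)
    (∀ lam : Fin k → Fin n → ℝ,
      hForm m n A B (fun i => ∑ α : Fin k, lam α i • w α ((i : ℕ) : ℤ))
        (fun i => ∑ α : Fin k, lam α i • w α ((i : ℕ) : ℤ))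
      = ∑ i : Fin n, ∑ α : Fin k, ∑ β : Fin k,
          ((B ((i : ℕ) : ℤ) *ᵥ w α ((i : ℕ) : ℤ)) ⬝ᵥ w β (((i : ℕ) : ℤ) + 1))
            * (lam α (i + 1) - lam α i) * (lam β (i + 1) - lam β i)) := by
  have hZ := hForm_sum_smul_solutions A B w hAsym hBper hwper hwsol
  refine ⟨fun u hu lam => ?_, fun u hu => ?_, fun lam => ?_⟩
  · rw [hZ]
    refine Finset.sum_eq_zero fun α _ => Finset.sum_eq_zero fun i _ => ?_
    rw [(memY_iff B w u).1 hu α (i - 1) i, sub_self, mul_zero]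
  · classical
    refine (memY_iff B w u).2 fun α => Fin.apply_eq_apply_of_apply_sub_one_eq fun j => ?_
    have hsingle := hu _ ⟨Pi.single α (Pi.single j 1), fun _ => rfl⟩
    rw [hZ] at hsingle
    simpa [Pi.single_apply, ite_apply, sub_eq_zero] using hsingle
  · rw [hZ]
    rw [Finset.sum_congr rfl fun α _ =>
      Fintype.sum_mul_sub_shift (lam α) (firstIntegralSeq B (w α) _) 1, Finset.sum_comm]
    simp only [firstIntegralSeq_sum_smul B w hwper hiso, Finset.sum_mul]
    refine Finset.sum_congr rfl fun i _ => Finset.sum_congr rfl fun α _ =>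
      Finset.sum_congr rfl fun β _ => ?_
    ring

/-- (i) `Y ⊥_h Z`; (ii) `Y` is the `h`-orthogonal complement of `Z`;
(iii) the restriction of `h` to `Z` is
`h(v,v) = Σ_i Σ_{α,β} g_i^{αβ} Δλ_{α,i} Δλ_{β,i}`. -/
theorem hessian_orthogonality (m n k : ℕ) (hm : 1 ≤ m) (hk1 : 1 ≤ k) (hkm : k ≤ m)
    [NeZero n]
    (A B : ℤ → Matrix (Fin m) (Fin m) ℝ)
    (hAper : ∀ i, A (i + n) = A i) (hBper : ∀ i, B (i + n) = B i)
    (hAsym : ∀ i, (A i)ᵀ = A i) (hBinv : ∀ i, IsUnit (B i).det)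
    (w : Fin k → ℤ → (Fin m → ℝ))
    (hwper : ∀ α i, w α (i + n) = w α i)
    (hwsol : ∀ α i,
      A i *ᵥ w α i - B (i - 1) *ᵥ w α (i - 1) - (B i)ᵀ *ᵥ w α (i + 1) = 0)
    (hiso : ∀ i α β,
      (B i *ᵥ w α i) ⬝ᵥ w β (i + 1) = (B i *ᵥ w β i) ⬝ᵥ w α (i + 1)) :
    -- (i)
    (∀ u : Fin n → Fin m → ℝ, memY m n k B w u →
      ∀ lam : Fin k → Fin n → ℝ,
        hForm m n A B u (fun i => ∑ α : Fin k, lam α i • w α ((i : ℕ) : ℤ)) = 0) ∧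
    -- (ii)
    (∀ u : Fin n → Fin m → ℝ,
      (∀ v : Fin n → Fin m → ℝ,
        (∃ lam : Fin k → Fin n → ℝ,
          ∀ i, v i = ∑ α : Fin k, lam α i • w α ((i : ℕ) : ℤ)) →
        hForm m n A B u v = 0) →
      memY m n k B w u) ∧
    -- (iii)
    (∀ lam : Fin k → Fin n → ℝ,
      hForm m n A B (fun i => ∑ α : Fin k, lam α i • w α ((i : ℕ) : ℤ))
        (fun i => ∑ α : Fin k, lam α i • w α ((i : ℕ) : ℤ))
      = ∑ i : Fin n, ∑ α : Fin k, ∑ β : Fin k,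
          ((B ((i : ℕ) : ℤ) *ᵥ w α ((i : ℕ) : ℤ)) ⬝ᵥ w β (((i : ℕ) : ℤ) + 1))
            * (lam α (i + 1) - lam α i) * (lam β (i + 1) - lam β i)) :=
  hessian_orthogonality_general m n k A B hBper hAsym w hwper hwsol hiso
end

section
/- Let G_1, …, G_n be invertible real symmetric k×k matrices such that Ḡ = Σ_{i=1}^n G_i^{−1} is invertible. Let Θ = {(μ_1, …, μ_n) ∈ (ℝ^k)^n : μ_1 + ⋯ + μ_n = 0} and let χ be the quadratic form χ(μ) = Σ_{i=1}^n μ_iᵀ G_i μ_i. Then the restriction of χ to Θ is nondegenerate and its index equals Σ_{i=1}^n ind(G_i) − ind(Ḡ). -/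
open Matrix BigOperators

/-- The index of a quadratic form `q` on a subspace `W`: the maximal dimension of a
subspace of `W` on which `q` is negative definite. -/
noncomputable def negIndexOn {V : Type*} [AddCommGroup V] [Module ℝ V]
    (W : Submodule ℝ V) (q : V → ℝ) : ℕ :=
  sSup {d : ℕ | ∃ U : Submodule ℝ V, U ≤ W ∧ Module.finrank ℝ U = d ∧
    ∀ x ∈ U, x ≠ 0 → q x < 0}

/-- The (Morse) index of a real symmetric matrix: the number of its negative
eigenvalues counted with multiplicity, equivalently the maximal dimension of a
subspace on which the associated quadratic form is negative definite. -/
noncomputable def matIndex {N : Type*} [Fintype N] (Q : Matrix N N ℝ) : ℕ :=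
  negIndexOn (⊤ : Submodule ℝ (N → ℝ)) (fun x => x ⬝ᵥ Q *ᵥ x)

/-- The subspace `Θ = {μ : μ_1 + ⋯ + μ_n = 0}`. -/
def thetaSub (n k : ℕ) : Submodule ℝ (Fin n → Fin k → ℝ) where
  carrier := {μ | ∑ i : Fin n, μ i = 0}
  add_mem' := by
    intro a b ha hb
    simp only [Set.mem_setOf_eq] at *
    simp [Finset.sum_add_distrib, ha, hb]
  zero_mem' := by simp
  smul_mem' := by
    intro c a ha
    simp only [Set.mem_setOf_eq] at *
    simp [← Finset.smul_sum, ha]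

/-!
With `L c = (G_i⁻¹ c)_i` one has `χ(μ, L c) = (∑ i, μ_i) ⬝ c` and `χ(L c, L c) = cᵀ Ḡ c`.
Hence, `Ḡ` being invertible, `(ℝ^k)^n = Θ ⊕ range L` is a `χ`-orthogonal splitting on whose
second summand `χ` is equivalent to `Ḡ`, while the coordinate blocks give a `χ`-orthogonal
splitting on which `χ` is `G_1 ⊕ ⋯ ⊕ G_n`. By Sylvester's law of inertia the index is additive
over orthogonal splittings, so `∑ ind G_i = ind (χ|Θ) + ind Ḡ`. Nondegeneracy of `χ|Θ` is
inherited from that of `χ`.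
-/

open Module Finset

lemma LinearMap.BilinForm.apply_sum_smul_self_of_isOrthoᵢ {R M ι : Type*} [CommSemiring R]
    [AddCommMonoid M] [Module R M] {B : LinearMap.BilinForm R M} {e : ι → M}
    (he : B.IsOrthoᵢ e) (s : Finset ι) (c : ι → R) :
    B (∑ i ∈ s, c i • e i) (∑ i ∈ s, c i • e i) = ∑ i ∈ s, c i * c i * B (e i) (e i) := by
  rw [LinearMap.map_sum₂]
  refine Finset.sum_congr rfl fun i hi => ?_
  rw [map_sum, Finset.sum_eq_single_of_mem i hi fun j _ hji => by simp [he hji.symm]]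
  simp [mul_assoc]

theorem LinearMap.SeparatingLeft.restrict_of_isCompl {R M : Type*} [CommRing R]
    [AddCommGroup M] [Module R M] {B : LinearMap.BilinForm R M} (hB : B.SeparatingLeft)
    {W₁ W₂ : Submodule R M} (hW : IsCompl W₁ W₂) (horth : ∀ x ∈ W₁, ∀ y ∈ W₂, B x y = 0) :
    (B.restrict W₁).SeparatingLeft := by
  rintro ⟨x, hx⟩ h
  refine Subtype.ext (hB x fun z => ?_)
  obtain ⟨y₁, y₂, hy₁, hy₂, rfl⟩ := Submodule.codisjoint_iff_exists_add_eq.mp hW.codisjoint z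
  rw [map_add, horth x hx y₂ hy₂, add_zero]
  exact h ⟨y₁, hy₁⟩

lemma LinearMap.isInternal_range_single {R ι : Type*} [Ring R] [Fintype ι] [DecidableEq ι]
    {φ : ι → Type*} [∀ i, AddCommGroup (φ i)] [∀ i, Module R (φ i)] :
    DirectSum.IsInternal fun i => LinearMap.range (LinearMap.single R φ i) := by
  refine DirectSum.isInternal_submodule_of_iSupIndep_of_iSup_eq_top
    (iSupIndep_def.mpr fun i => ?_) (LinearMap.iSup_range_single R φ)
  simpa using LinearMap.disjoint_single_single R φ {i} {i}ᶜ disjoint_compl_right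

section NegIndex

variable {V : Type*} [AddCommGroup V] [Module ℝ V]

lemma negIndexOn_le {W : Submodule ℝ V} {q : V → ℝ} {m : ℕ}
    (h : ∀ U ≤ W, (∀ x ∈ U, x ≠ 0 → q x < 0) → finrank ℝ U ≤ m) : negIndexOn W q ≤ m :=
  csSup_le ⟨0, ⊥, bot_le, finrank_bot ℝ V, by simp⟩ fun _ ⟨U, hUW, hU, hneg⟩ =>
    hU ▸ h U hUW hneg

lemma le_negIndexOn [FiniteDimensional ℝ V] {W U : Submodule ℝ V} {q : V → ℝ} (hUW : U ≤ W)
    (hU : ∀ x ∈ U, x ≠ 0 → q x < 0) : finrank ℝ U ≤ negIndexOn W q :=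
  le_csSup ⟨finrank ℝ V, fun _ ⟨U', _, hU', _⟩ => hU' ▸ U'.finrank_le⟩ ⟨U, hUW, rfl, hU⟩

lemma finrank_add_finrank_le_of_neg_of_nonneg [FiniteDimensional ℝ V] {q : V → ℝ}
    {U P W : Submodule ℝ V} (hUW : U ≤ W) (hPW : P ≤ W) (hU : ∀ x ∈ U, x ≠ 0 → q x < 0)
    (hP : ∀ x ∈ P, 0 ≤ q x) : finrank ℝ U + finrank ℝ P ≤ finrank ℝ W := by
  have hUP : U ⊓ P = ⊥ := (Submodule.eq_bot_iff _).mpr fun x hx => by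
    by_contra hx0
    exact (hU x hx.1 hx0).not_ge (hP x hx.2)
  have := Submodule.finrank_sup_add_finrank_inf_eq U P
  rw [hUP, finrank_bot, add_zero] at this
  exact this ▸ Submodule.finrank_mono (sup_le hUW hPW)

lemma negIndexOn_map {V' : Type*} [AddCommGroup V'] [Module ℝ V'] {f : V →ₗ[ℝ] V'}
    (hf : Function.Injective f) (W : Submodule ℝ V) (q : V' → ℝ) :
    negIndexOn (W.map f) q = negIndexOn W (q ∘ f) := by
  unfold negIndexOn
  congr 1
  ext d
  constructor
  · rintro ⟨U, hUW, rfl, hneg⟩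
    have hU : (U.comap f).map f = U :=
      Submodule.map_comap_eq_of_le (hUW.trans LinearMap.map_le_range)
    refine ⟨U.comap f, fun x hx => ?_, ?_, fun x hx hx0 => hneg _ hx ?_⟩
    · obtain ⟨w, hw, hwx⟩ := hUW hx
      exact hf hwx ▸ hw
    · conv_rhs => rw [← hU]
      exact (Submodule.equivMapOfInjective f hf _).finrank_eq
    · exact (map_ne_zero_iff f hf).mpr hx0
  · rintro ⟨U, hUW, rfl, hneg⟩
    refine ⟨U.map f, Submodule.map_mono hUW,
      (Submodule.equivMapOfInjective f hf U).finrank_eq.symm, ?_⟩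
    rintro _ ⟨x, hx, rfl⟩ hx0
    exact hneg x hx (by rintro rfl; exact hx0 (map_zero f))

namespace LinearMap.BilinForm

variable {B : LinearMap.BilinForm ℝ V}

lemma neg_of_mem_span_image {ι : Type*} {e : ι → V} (he : B.IsOrthoᵢ e) {s : Finset ι}
    (hs : ∀ i ∈ s, B (e i) (e i) < 0) :
    ∀ x ∈ Submodule.span ℝ (e '' s), x ≠ 0 → B x x < 0 := by
  intro x hx hx0
  obtain ⟨c, rfl⟩ := (Submodule.mem_span_image_finset_iff_exists_fun' ℝ).mp hx
  rw [B.apply_sum_smul_self_of_isOrthoᵢ he]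
  have hterm : ∀ i ∈ s, c i * c i * B (e i) (e i) ≤ 0 := fun i hi =>
    mul_nonpos_of_nonneg_of_nonpos (mul_self_nonneg _) (hs i hi).le
  refine (Finset.sum_nonpos hterm).lt_of_ne fun hzero => hx0 ?_
  refine Finset.sum_eq_zero fun i hi => ?_
  have := (Finset.sum_eq_zero_iff_of_nonpos hterm).mp hzero i hi
  rw [mul_self_eq_zero.mp ((mul_eq_zero.mp this).resolve_right (hs i hi).ne), zero_smul]

lemma nonneg_of_mem_span_image {ι : Type*} {e : ι → V} (he : B.IsOrthoᵢ e) {s : Finset ι}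
    (hs : ∀ i ∈ s, 0 ≤ B (e i) (e i)) : ∀ x ∈ Submodule.span ℝ (e '' s), 0 ≤ B x x := by
  intro x hx
  obtain ⟨c, rfl⟩ := (Submodule.mem_span_image_finset_iff_exists_fun' ℝ).mp hx
  rw [B.apply_sum_smul_self_of_isOrthoᵢ he]
  exact Finset.sum_nonneg fun i hi => mul_nonneg (mul_self_nonneg _) (hs i hi)

variable [FiniteDimensional ℝ V]

/-- Sylvester's law of inertia. -/
theorem negIndexOn_span_eq_card {ι : Type*} [Fintype ι] [DecidableEq ι] {e : ι → V}
    (he : LinearIndependent ℝ e) (ho : B.IsOrthoᵢ e) :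
    negIndexOn (Submodule.span ℝ (Set.range e)) (fun x => B x x)
      = #{i | B (e i) (e i) < 0} := by
  set s : Finset ι := {i | B (e i) (e i) < 0}
  have hle (t : Finset ι) : Submodule.span ℝ (e '' t) ≤ Submodule.span ℝ (Set.range e) :=
    Submodule.span_mono (Set.image_subset_range _ _)
  have hrank (t : Finset ι) : finrank ℝ (Submodule.span ℝ (e '' t)) = #t := by
    rw [Set.image_eq_range]
    exact (finrank_span_eq_card (he.comp _ Subtype.val_injective)).trans (by simp)
  refine le_antisymm (negIndexOn_le fun U hU hneg => ?_) ?_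
  · have := finrank_add_finrank_le_of_neg_of_nonneg hU (hle sᶜ) hneg
      (nonneg_of_mem_span_image ho fun i hi => by simpa [s] using hi)
    rw [hrank, finrank_span_eq_card he, Finset.card_compl] at this
    have := Finset.card_le_univ s
    omega
  · exact hrank s ▸
      le_negIndexOn (hle s) (neg_of_mem_span_image ho fun i hi => by simpa [s] using hi)

lemma negIndexOn_eq_card_of_basis {W : Submodule ℝ V} {ι : Type*} [Fintype ι] [DecidableEq ι]
    (t : Basis ι ℝ W) (ht : (B.restrict W).IsOrthoᵢ t) :
    negIndexOn W (fun x => B x x) = #{i | B (t i) (t i) < 0} := by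
  have hspan : Submodule.span ℝ (Set.range (W.subtype ∘ t)) = W := by
    rw [Set.range_comp, Submodule.span_image, t.span_eq, Submodule.map_top,
      Submodule.range_subtype]
  have := negIndexOn_span_eq_card (t.linearIndependent.map' W.subtype W.ker_subtype) ht
  rwa [hspan] at this

theorem negIndexOn_top_eq_sum_of_isInternal (hB : B.IsSymm) {ι : Type*} [Fintype ι]
    [DecidableEq ι] {W : ι → Submodule ℝ V} (hW : DirectSum.IsInternal W)
    (horth : ∀ i j, i ≠ j → ∀ x ∈ W i, ∀ y ∈ W j, B x y = 0) :
    negIndexOn ⊤ (fun x => B x x) = ∑ i, negIndexOn (W i) (fun x => B x x) := by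
  choose t ht using fun i => exists_orthogonal_basis (isSymm_iff.mp (hB.restrict (W i)))
  set b := hW.collectedBasis t
  have hb : B.IsOrthoᵢ b := by
    rintro ⟨i, j⟩ ⟨i', j'⟩ hne
    simp only [b, DirectSum.IsInternal.collectedBasis_coe]
    by_cases hii' : i = i'
    · subst hii'
      exact ht i fun hjj' => hne (congrArg _ hjj')
    · exact horth i i' hii' _ (t i j).2 _ (t i' j').2
  have htop := negIndexOn_span_eq_card b.linearIndependent hb
  rw [b.span_eq] at htop
  simp only [htop, fun i => negIndexOn_eq_card_of_basis (t i) (ht i), Finset.card_filter,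
    Fintype.sum_sigma, b, DirectSum.IsInternal.collectedBasis_coe]

theorem negIndexOn_top_eq_add_of_isCompl (hB : B.IsSymm) {W₁ W₂ : Submodule ℝ V}
    (hW : IsCompl W₁ W₂) (horth : ∀ x ∈ W₁, ∀ y ∈ W₂, B x y = 0) :
    negIndexOn ⊤ (fun x => B x x)
      = negIndexOn W₁ (fun x => B x x) + negIndexOn W₂ (fun x => B x x) := by
  have hint : DirectSum.IsInternal fun b => cond b W₁ W₂ :=
    (DirectSum.isInternal_submodule_iff_isCompl _ (i := true) (j := false) (by decide)
      (by ext b; cases b <;> simp)).mpr hW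
  rw [negIndexOn_top_eq_sum_of_isInternal hB hint, Fintype.sum_bool]
  · rfl
  rintro (_ | _) (_ | _) hne x hx y hy
  · exact absurd rfl hne
  · rw [← hB.eq]
    exact horth y hy x hx
  · exact horth x hx y hy
  · exact absurd rfl hne

end LinearMap.BilinForm

end NegIndex

section BlockForm

variable {ι m : Type*} [Fintype ι] [Fintype m] [DecidableEq m]

/-- The bilinear form of `χ`. -/
noncomputable def blockForm (G : ι → Matrix m m ℝ) : LinearMap.BilinForm ℝ (ι → m → ℝ) :=
  ∑ i, (Matrix.toBilin' (G i)).compl₁₂ (LinearMap.proj i) (LinearMap.proj i)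

lemma blockForm_apply (G : ι → Matrix m m ℝ) (μ ν : ι → m → ℝ) :
    blockForm G μ ν = ∑ i, μ i ⬝ᵥ G i *ᵥ ν i := by
  simp [blockForm, Matrix.toBilin'_apply']

lemma blockForm_isSymm {G : ι → Matrix m m ℝ} (hG : ∀ i, (G i).IsSymm) :
    (blockForm G).IsSymm := by
  refine ⟨fun μ ν => ?_⟩
  simp only [blockForm_apply]
  refine Finset.sum_congr rfl fun i _ => ?_
  rw [dotProduct_mulVec, ← vecMul_transpose, (hG i).eq, dotProduct_comm]

/-- The range of this map is the `χ`-orthogonal complement of `Θ`. -/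
noncomputable def inverseEmbedding (G : ι → Matrix m m ℝ) : (m → ℝ) →ₗ[ℝ] (ι → m → ℝ) :=
  LinearMap.pi fun i => (G i)⁻¹.mulVecLin

lemma sum_inverseEmbedding_apply (G : ι → Matrix m m ℝ) (c : m → ℝ) :
    ∑ i, inverseEmbedding G c i = (∑ i, (G i)⁻¹) *ᵥ c := by
  rw [sum_mulVec]
  rfl

lemma blockForm_inverseEmbedding {G : ι → Matrix m m ℝ} (hG : ∀ i, IsUnit (G i).det)
    (μ : ι → m → ℝ) (c : m → ℝ) : blockForm G μ (inverseEmbedding G c) = (∑ i, μ i) ⬝ᵥ c := by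
  rw [blockForm_apply, sum_dotProduct]
  refine Finset.sum_congr rfl fun i _ => ?_
  rw [inverseEmbedding, LinearMap.pi_apply, mulVecLin_apply, mulVec_mulVec,
    mul_nonsing_inv _ (hG i), one_mulVec]

lemma inverseEmbedding_injective {G : ι → Matrix m m ℝ} (hG : IsUnit (∑ i, (G i)⁻¹).det) :
    Function.Injective (inverseEmbedding G) := by
  refine fun c c' h => mulVec_injective_iff_isUnit.mpr ((isUnit_iff_isUnit_det _).mpr hG) ?_
  simpa only [sum_inverseEmbedding_apply] using congrArg (fun μ => ∑ i, μ i) h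

theorem negIndexOn_range_inverseEmbedding {G : ι → Matrix m m ℝ} (hG : ∀ i, IsUnit (G i).det)
    (hGbar : IsUnit (∑ i, (G i)⁻¹).det) :
    negIndexOn (LinearMap.range (inverseEmbedding G)) (fun μ => blockForm G μ μ)
      = matIndex (∑ i, (G i)⁻¹) := by
  rw [LinearMap.range_eq_map, negIndexOn_map (inverseEmbedding_injective hGbar)]
  congr 1
  funext c
  rw [Function.comp_apply, blockForm_inverseEmbedding hG, sum_inverseEmbedding_apply,
    dotProduct_comm]

variable [DecidableEq ι]

lemma blockForm_apply_single (G : ι → Matrix m m ℝ) (μ : ι → m → ℝ) (i : ι) (y : m → ℝ) :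
    blockForm G μ (Pi.single i y) = μ i ⬝ᵥ G i *ᵥ y := by
  rw [blockForm_apply, Finset.sum_eq_single i (fun j _ hji => by simp [hji]) (by simp)]
  simp

lemma blockForm_separatingLeft {G : ι → Matrix m m ℝ} (hG : ∀ i, IsUnit (G i).det) :
    (blockForm G).SeparatingLeft := by
  intro μ h
  funext i
  have := h (Pi.single i ((G i)⁻¹ *ᵥ μ i))
  rwa [blockForm_apply_single, mulVec_mulVec, mul_nonsing_inv _ (hG i), one_mulVec,
    dotProduct_self_eq_zero] at this

theorem negIndexOn_top_blockForm {G : ι → Matrix m m ℝ} (hG : ∀ i, (G i).IsSymm) :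
    negIndexOn ⊤ (fun μ => blockForm G μ μ) = ∑ i, matIndex (G i) := by
  rw [(blockForm G).negIndexOn_top_eq_sum_of_isInternal (blockForm_isSymm hG)
    LinearMap.isInternal_range_single]
  · refine Finset.sum_congr rfl fun i _ => ?_
    rw [LinearMap.range_eq_map, negIndexOn_map (Pi.single_injective (M := fun _ => m → ℝ) i)]
    congr 1
    funext x
    simp [blockForm_apply_single]
  · rintro i j hij _ ⟨x, rfl⟩ _ ⟨y, rfl⟩
    simp [blockForm_apply_single, Pi.single_eq_of_ne hij.symm]

end BlockForm

theorem isCompl_thetaSub_range_inverseEmbedding {n k : ℕ} {G : Fin n → Matrix (Fin k) (Fin k) ℝ}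
    (hG : IsUnit (∑ i, (G i)⁻¹).det) :
    IsCompl (thetaSub n k) (LinearMap.range (inverseEmbedding G)) := by
  refine ⟨Submodule.disjoint_def.mpr ?_, Submodule.codisjoint_iff_exists_add_eq.mpr fun μ => ?_⟩
  · rintro _ hμ ⟨c, rfl⟩
    have hc : (∑ i, (G i)⁻¹) *ᵥ c = (∑ i, (G i)⁻¹) *ᵥ 0 := by
      rw [← sum_inverseEmbedding_apply, mulVec_zero]
      exact hμ
    rw [mulVec_injective_iff_isUnit.mpr ((isUnit_iff_isUnit_det _).mpr hG) hc, map_zero]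
  · set ν := inverseEmbedding G ((∑ i, (G i)⁻¹)⁻¹ *ᵥ ∑ i, μ i)
    refine ⟨μ - ν, ν, ?_, ⟨_, rfl⟩, sub_add_cancel μ ν⟩
    change ∑ i, (μ - ν) i = 0
    simp only [Pi.sub_apply, Finset.sum_sub_distrib, ν, sum_inverseEmbedding_apply,
      mulVec_mulVec, mul_nonsing_inv _ hG, one_mulVec, sub_self]

theorem index_on_theta_general (n k : ℕ)
    (G : Fin n → Matrix (Fin k) (Fin k) ℝ)
    (hGsym : ∀ i, (G i)ᵀ = G i) (hGinv : ∀ i, IsUnit (G i).det)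
    (hGbar : IsUnit (∑ i : Fin n, (G i)⁻¹).det) :
    (∀ μ ∈ thetaSub n k,
      (∀ ν ∈ thetaSub n k, (∑ i : Fin n, μ i ⬝ᵥ (G i *ᵥ ν i)) = 0) → μ = 0) ∧
    (negIndexOn (thetaSub n k) (fun μ => ∑ i : Fin n, μ i ⬝ᵥ (G i *ᵥ μ i)) : ℤ)
      = (∑ i : Fin n, (matIndex (G i) : ℤ)) - (matIndex (∑ i : Fin n, (G i)⁻¹) : ℤ) := by
  have hcompl := isCompl_thetaSub_range_inverseEmbedding hGbar
  have horth : ∀ μ ∈ thetaSub n k, ∀ ν ∈ LinearMap.range (inverseEmbedding G),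
      blockForm G μ ν = 0 := by
    rintro μ hμ _ ⟨c, rfl⟩
    rw [blockForm_inverseEmbedding hGinv, show ∑ i, μ i = 0 from hμ, zero_dotProduct]
  simp only [← blockForm_apply]
  constructor
  · intro μ hμ h
    exact congrArg Subtype.val <| (blockForm_separatingLeft hGinv).restrict_of_isCompl hcompl
      horth ⟨μ, hμ⟩ fun ν => h ν ν.2
  · have hsplit := (blockForm G).negIndexOn_top_eq_add_of_isCompl (blockForm_isSymm hGsym)
      hcompl horth
    rw [negIndexOn_top_blockForm hGsym, negIndexOn_range_inverseEmbedding hGinv hGbar] at hsplit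
    rw [← Nat.cast_sum, hsplit]
    push_cast
    ring

/-- The restriction of `χ(μ) = Σ_i μ_iᵀ G_i μ_i` to `Θ` is nondegenerate, and its
index equals `Σ_i ind(G_i) - ind(Ḡ)` where `Ḡ = Σ_i G_i⁻¹`. -/
theorem index_on_theta (n k : ℕ) (hn : 1 ≤ n) (hk : 1 ≤ k)
    (G : Fin n → Matrix (Fin k) (Fin k) ℝ)
    (hGsym : ∀ i, (G i)ᵀ = G i) (hGinv : ∀ i, IsUnit (G i).det)
    (hGbar : IsUnit (∑ i : Fin n, (G i)⁻¹).det) :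
    (∀ μ ∈ thetaSub n k,
      (∀ ν ∈ thetaSub n k, (∑ i : Fin n, μ i ⬝ᵥ (G i *ᵥ ν i)) = 0) → μ = 0) ∧
    (negIndexOn (thetaSub n k) (fun μ => ∑ i : Fin n, μ i ⬝ᵥ (G i *ᵥ μ i)) : ℤ)
      = (∑ i : Fin n, (matIndex (G i) : ℤ)) - (matIndex (∑ i : Fin n, (G i)⁻¹) : ℤ) :=
  index_on_theta_general n k G hGsym hGinv hGbar
end

section
/- Let G_1, …, G_n be invertible real symmetric k×k matrices, extended n-periodically (G_0 = G_n), and let ρ ∈ ℂ with ρ ≠ 0. Define the linear operator 𝐆_ρ on (ℂ^k)^n by (𝐆_ρ λ)_i = G_{i−1}(λ_i − λ_{i−1}) − G_i(λ_{i+1} − λ_i) for i = 1, …, n, with the quasiperiodic conventions λ_0 = ρ^{−1} λ_n and λ_{n+1} = ρ λ_1. Then det 𝐆_ρ = (−1)^k ρ^{−k} (ρ − 1)^{2k} ∏_{i=1}^n det G_i. -/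
open Matrix BigOperators


open Kronecker

lemma fin_val_add_one {N : ℕ} (x : Fin (N+1)) :
    ((x + 1 : Fin (N+1)) : ℕ) = if (x:ℕ) = N then 0 else (x:ℕ)+1 := by
  rw [Fin.val_add_one]
  rcases eq_or_ne x (Fin.last N) with h | h
  · simp [h]
  · rw [if_neg h, if_neg]
    simpa [Fin.ext_iff] using h

lemma det_cyc {n : ℕ} (w : Fin (n+1) → ℂ) :
    (Matrix.of fun i j => (if j = i then (1:ℂ) else 0) + (if j = i + 1 then -w i else 0)).det
      = 1 - ∏ i, w i := by
  set M : Matrix (Fin (n+1)) (Fin (n+1)) ℂ :=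
    Matrix.of fun i j => (if j = i then (1:ℂ) else 0) + (if j = i + 1 then -w i else 0) with hM
  rcases n with _ | m
  · rw [Matrix.det_fin_one]
    have h1 : (0 : Fin 1) = 0 + 1 := rfl
    show ((if (0:Fin 1) = 0 then (1:ℂ) else 0) + (if (0:Fin 1) = 0 + 1 then -w 0 else 0)) = _
    rw [if_pos rfl, if_pos h1, Fin.prod_univ_one]; ring
  · rw [Matrix.det_succ_column_zero]
    rw [Fintype.sum_eq_add (0 : Fin (m+2)) (Fin.last (m+1))
      (by simp [Fin.ext_iff])
      (by
        intro x ⟨hx0, hxl⟩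
        have h1 : M x 0 = 0 := by
          show ((if (0:Fin (m+2)) = x then (1:ℂ) else 0) + (if (0:Fin (m+2)) = x + 1 then -w x else 0)) = 0
          simp only [ne_eq, Fin.ext_iff, Fin.val_zero, Fin.val_last] at hx0 hxl
          rw [if_neg, if_neg, add_zero]
          · rw [Fin.ext_iff, fin_val_add_one]
            simp only [Fin.val_zero]
            split_ifs <;> first | exact not_false | omega
          · rw [Fin.ext_iff]; simp only [Fin.val_zero]; omega
        rw [h1]; ring)]
    have hminor0 : (M.submatrix (Fin.succAbove 0) Fin.succ).det = 1 := by
      rw [Matrix.det_of_upperTriangular]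
      · apply Finset.prod_eq_one
        intro a _
        show ((if a.succ = a.succ then (1:ℂ) else 0) + (if a.succ = a.succ + 1 then -w a.succ else 0)) = 1
        rw [if_pos rfl, if_neg, add_zero]
        rw [Fin.ext_iff, fin_val_add_one]
        have := a.isLt
        simp only [Fin.val_succ]
        split_ifs <;> first | exact not_false | omega
      · intro a b hba
        have hba' : (b:ℕ) < (a:ℕ) := hba
        show ((if b.succ = a.succ then (1:ℂ) else 0) + (if b.succ = a.succ + 1 then -w a.succ else 0)) = 0
        rw [if_neg, if_neg, add_zero]
        · rw [Fin.ext_iff, fin_val_add_one]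
          have := a.isLt
          simp only [Fin.val_succ]
          split_ifs <;> first | exact not_false | omega
        · rw [Fin.ext_iff]; simp only [Fin.val_succ]; omega
    have hminorl : (M.submatrix (Fin.last (m+1)).succAbove Fin.succ).det
        = ∏ a : Fin (m+1), (-w a.castSucc) := by
      rw [Matrix.det_of_lowerTriangular]
      · apply Finset.prod_congr rfl
        intro a _
        rw [Matrix.submatrix_apply, Fin.succAbove_last]
        show ((if a.succ = a.castSucc then (1:ℂ) else 0) + (if a.succ = a.castSucc + 1 then -w a.castSucc else 0)) = _
        rw [if_neg, if_pos, zero_add]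
        · rw [Fin.ext_iff, fin_val_add_one]
          have := a.isLt
          simp only [Fin.val_succ, Fin.coe_castSucc]
          split_ifs <;> first | exact not_false | omega
        · rw [Fin.ext_iff]; simp only [Fin.val_succ, Fin.coe_castSucc]; omega
      · intro a b hab
        have hab' : (a:ℕ) < (b:ℕ) := hab
        rw [Matrix.submatrix_apply, Fin.succAbove_last]
        show ((if b.succ = a.castSucc then (1:ℂ) else 0) + (if b.succ = a.castSucc + 1 then -w a.castSucc else 0)) = 0
        rw [if_neg, if_neg, add_zero]
        · rw [Fin.ext_iff, fin_val_add_one]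
          have := a.isLt; have := b.isLt
          simp only [Fin.val_succ, Fin.coe_castSucc]
          split_ifs <;> first | exact not_false | omega
        · rw [Fin.ext_iff]; simp only [Fin.val_succ, Fin.coe_castSucc]; omega
    have hM00 : M 0 0 = 1 := by
      show ((if (0:Fin (m+2)) = 0 then (1:ℂ) else 0) + (if (0:Fin (m+2)) = 0 + 1 then -w 0 else 0)) = 1
      rw [if_pos rfl, if_neg, add_zero]
      rw [Fin.ext_iff, fin_val_add_one]; simp
    have hMl0 : M (Fin.last (m+1)) 0 = -w (Fin.last (m+1)) := by
      show ((if (0:Fin (m+2)) = Fin.last (m+1) then (1:ℂ) else 0) + (if (0:Fin (m+2)) = Fin.last (m+1) + 1 then -w (Fin.last (m+1)) else 0)) = _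
      rw [if_neg, if_pos, zero_add]
      · rw [Fin.ext_iff, fin_val_add_one]; simp
      · rw [Fin.ext_iff]; simp
    rw [hminor0, hminorl, hM00, hMl0]
    have hneg : (∏ a : Fin (m+1), (-w a.castSucc))
        = (-1:ℂ)^(m+1) * ∏ a : Fin (m+1), w a.castSucc := by
      rw [Finset.prod_congr rfl (fun a _ => (by ring : -w a.castSucc = (-1) * w a.castSucc)),
        Finset.prod_mul_distrib, Finset.prod_const, Finset.card_univ, Fintype.card_fin]
    rw [hneg, Fin.prod_univ_castSucc (f := w)]
    simp only [Fin.val_last, Fin.val_zero, pow_zero]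
    have h2 : ((-1:ℂ))^(m+1) * ((-1:ℂ))^(m+1) = 1 := by
      rw [← pow_add, ← two_mul, pow_mul]; norm_num
    linear_combination (-(w (Fin.last (m+1)) * ∏ a : Fin (m+1), w a.castSucc)) * h2

section Main
variable {m k : ℕ} (G : ℤ → Matrix (Fin k) (Fin k) ℝ) (ρ : ℂ)

noncomputable def Amat : Matrix (Fin (m+1)) (Fin (m+1)) ℂ :=
  Matrix.of fun i j => (if j = i then (1:ℂ) else 0)
    + (if j = i + 1 then -(if (i:ℕ) = m + 1 - 1 then ρ else 1) else 0)

noncomputable def Bmat : Matrix (Fin (m+1)) (Fin (m+1)) ℂ :=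
  Matrix.of fun i j => (if j = i then (1:ℂ) else 0)
    + (if j = i - 1 then -(if (i:ℕ) = 0 then ρ⁻¹ else 1) else 0)

noncomputable def Gc : Fin (m+1) → Matrix (Fin k) (Fin k) ℂ :=
  fun i => (G (((i:ℕ):ℤ) - 1)).map Complex.ofReal

noncomputable def Mmid : Matrix (Fin (m+1) × Fin k) (Fin (m+1) × Fin k) ℂ :=
  (Matrix.reindex (Equiv.prodComm (Fin k) (Fin (m+1))) (Equiv.prodComm (Fin k) (Fin (m+1))))
    (Matrix.blockDiagonal (Gc (m:=m) G))

lemma Mmid_apply (p q : Fin (m+1) × Fin k) :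
    Mmid (m:=m) G p q = if p.1 = q.1 then Gc (m:=m) G p.1 p.2 q.2 else 0 := by
  simp only [Mmid, Matrix.reindex_apply, Matrix.submatrix_apply, Equiv.prodComm_symm,
    Equiv.prodComm_apply, Prod.swap, Matrix.blockDiagonal_apply]

lemma MB_apply (p q : Fin (m+1) × Fin k) :
    ((Mmid (m:=m) G) * ((Bmat (m := m) ρ) ⊗ₖ (1 : Matrix (Fin k) (Fin k) ℂ))) p q
      = Gc (m:=m) G p.1 p.2 q.2 * Bmat ρ p.1 q.1 := by
  rw [Matrix.mul_apply, Fintype.sum_prod_type]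
  simp only [Mmid_apply, Matrix.kroneckerMap_apply, Matrix.one_apply, mul_ite, ite_mul,
    zero_mul, mul_zero, mul_one, Finset.sum_ite_eq, Finset.sum_ite_eq', Finset.mem_univ, if_true]

lemma AMB_apply (p q : Fin (m+1) × Fin k) :
    (((Amat (m := m) ρ) ⊗ₖ (1 : Matrix (Fin k) (Fin k) ℂ)) * ((Mmid (m:=m) G)
        * ((Bmat (m := m) ρ) ⊗ₖ (1 : Matrix (Fin k) (Fin k) ℂ)))) p q
      = ∑ r1 : Fin (m+1), Amat ρ p.1 r1 * (Gc (m:=m) G r1 p.2 q.2 * Bmat ρ r1 q.1) := by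
  rw [Matrix.mul_apply, Fintype.sum_prod_type]
  simp only [MB_apply, Matrix.kroneckerMap_apply, Matrix.one_apply, mul_ite, ite_mul,
    zero_mul, mul_zero, mul_one, one_mul, Finset.sum_ite_eq, Finset.sum_ite_eq',
    Finset.mem_univ, if_true]

end Main

/-- The operator `𝐆_ρ` on `(ℂ^k)^n`:
`(𝐆_ρ λ)_i = G_{i-1}(λ_i - λ_{i-1}) - G_i(λ_{i+1} - λ_i)` with the quasiperiodic
conventions `λ_0 = ρ⁻¹ λ_n`, `λ_{n+1} = ρ λ_1`, written as an `(nk) × (nk)`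
complex matrix. -/
noncomputable def Grho (n k : ℕ) [NeZero n] (G : ℤ → Matrix (Fin k) (Fin k) ℝ)
    (ρ : ℂ) : Matrix (Fin n × Fin k) (Fin n × Fin k) ℂ :=
  fun p q =>
    (if q.1 = p.1 then
        ((G (((p.1 : ℕ) : ℤ) - 1) p.2 q.2 : ℂ) + (G ((p.1 : ℕ) : ℤ) p.2 q.2 : ℂ)) else 0)
    + (if q.1 = p.1 - 1 then
        -((if (p.1 : ℕ) = 0 then ρ⁻¹ else 1) * (G (((p.1 : ℕ) : ℤ) - 1) p.2 q.2 : ℂ)) else 0)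
    + (if q.1 = p.1 + 1 then
        -((if (p.1 : ℕ) = n - 1 then ρ else 1) * (G ((p.1 : ℕ) : ℤ) p.2 q.2 : ℂ)) else 0)

lemma key_entry {m k : ℕ} (G : ℤ → Matrix (Fin k) (Fin k) ℝ) (ρ : ℂ) (hρ : ρ ≠ 0)
    (hGper : ∀ i, G (i + (m+1 : ℕ)) = G i)
    (p1 q1 : Fin (m+1)) (p2 q2 : Fin k) :
    ∑ r1 : Fin (m+1), Amat ρ p1 r1 * (Gc (m:=m) G r1 p2 q2 * Bmat ρ r1 q1)
      = Grho (m+1) k G ρ (p1,p2) (q1,q2) := by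
  have hsub : ∀ a b : Fin (m+1), (a = b - 1) = (b = a + 1) := by
    intro a b
    exact propext ⟨fun h => by rw [h, sub_add_cancel], fun h => by rw [h, add_sub_cancel_right]⟩
  have hq : ∀ x : Fin (m+1), (q1 = x) = (x = q1) := fun x => propext eq_comm
  simp only [Amat, Bmat, Matrix.of_apply, hsub, hq, add_mul, mul_add, Finset.sum_add_distrib,
    ite_mul, mul_ite, mul_zero, zero_mul, mul_one, one_mul, mul_neg, neg_mul,
    Finset.sum_ite_eq', Finset.mem_univ, if_true, add_sub_cancel_right]
  have hGc1 : ∀ x : Fin (m+1), Gc (m:=m) G (x+1) p2 q2 = ((G ((x:ℕ):ℤ) p2 q2 : ℝ) : ℂ) := by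
    intro x
    simp only [Gc, Matrix.map_apply, Complex.ofReal_inj]
    have harg : G ((((x+1 : Fin (m+1)):ℕ):ℤ) - 1) = G ((x:ℕ):ℤ) := by
      rw [fin_val_add_one]
      by_cases hx : (x:ℕ) = m
      · rw [if_pos hx]
        have harg2 : ((0:ℕ):ℤ) - 1 + ((m+1:ℕ):ℤ) = ((x:ℕ):ℤ) := by push_cast [hx]; ring
        rw [← hGper (((0:ℕ):ℤ) - 1), harg2]
      · rw [if_neg hx]
        congr 1
        push_cast; ring
    rw [harg]
  have c1 : (p1 = q1) = (q1 = p1) := propext eq_comm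
  have c2 : (p1 + 1 = q1) = (q1 = p1 + 1) := propext eq_comm
  have c4 : (q1 + 1 = p1 + 1) = (q1 = p1) :=
    propext ⟨fun h => add_right_cancel h, fun h => by rw [h]⟩
  have c3 : (q1 + 1 = p1) = (q1 = p1 - 1) :=
    propext ⟨fun h => by rw [← h, add_sub_cancel_right], fun h => by rw [h, sub_add_cancel]⟩
  simp only [c1, c2, c3, c4]
  have hvq : ((q1 + 1 : Fin (m+1)) : ℕ) = if (q1:ℕ) = m then 0 else (q1:ℕ)+1 :=
    fin_val_add_one q1
  have E1 : (if q1 = p1 then Gc (m:=m) G q1 p2 q2 else 0)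
      = (if q1 = p1 then ((G (((p1:ℕ):ℤ) - 1) p2 q2 : ℝ) : ℂ) else 0) := by
    split_ifs with h
    · rw [h]; simp [Gc, Matrix.map_apply]
    · rfl
  have E2 : (if q1 = p1 + 1 then
        -if (p1:ℕ) = m + 1 - 1 then ρ * Gc (m:=m) G q1 p2 q2 else Gc (m:=m) G q1 p2 q2 else 0)
      = (if q1 = p1 + 1 then
          -((if (p1:ℕ) = m + 1 - 1 then ρ else 1) * ((G ((p1:ℕ):ℤ) p2 q2 : ℝ) : ℂ)) else 0) := by
    split_ifs with h h2
    · rw [h, hGc1 p1]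
    · rw [h, hGc1 p1]; ring
    · rfl
  have E3 : (-if ((q1 + 1 : Fin (m+1)):ℕ) = 0 then
          (if q1 = p1 - 1 then Gc (m:=m) G (q1+1) p2 q2 * ρ⁻¹ else 0) +
            (if q1 = p1 then
              -if (p1:ℕ) = m + 1 - 1 then ρ * (Gc (m:=m) G (q1+1) p2 q2 * ρ⁻¹)
               else Gc (m:=m) G (q1+1) p2 q2 * ρ⁻¹ else 0)
        else
          (if q1 = p1 - 1 then Gc (m:=m) G (q1+1) p2 q2 else 0) +
            (if q1 = p1 then
              -if (p1:ℕ) = m + 1 - 1 then ρ * Gc (m:=m) G (q1+1) p2 q2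
               else Gc (m:=m) G (q1+1) p2 q2 else 0))
      = (if q1 = p1 - 1 then
            -((if (p1:ℕ) = 0 then ρ⁻¹ else 1) * ((G (((p1:ℕ):ℤ) - 1) p2 q2 : ℝ) : ℂ)) else 0)
        + (if q1 = p1 then ((G ((p1:ℕ):ℤ) p2 q2 : ℝ) : ℂ) else 0) := by
    by_cases h1 : q1 = p1
    · subst h1
      by_cases h2 : q1 = q1 - 1
      · have hv2 := congrArg Fin.val h2
        rw [Fin.coe_sub_one] at hv2
        have hqm : (q1:ℕ) = 0 ∧ m = 0 := by
          by_cases hz : q1 = 0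
          · have hz' : (q1:ℕ) = 0 := by rw [hz]; rfl
            rw [if_pos hz] at hv2
            omega
          · have hz' : (q1:ℕ) ≠ 0 := by
              intro h; exact hz (by rw [Fin.ext_iff, Fin.val_zero]; exact h)
            rw [if_neg hz] at hv2
            omega
        have t1 : (q1 = q1) = True := eq_true rfl
        have t2 : (q1 = q1 - 1) = True := eq_true h2
        have tv : (((q1 + 1 : Fin (m+1)):ℕ) = 0) = True :=
          eq_true (by rw [hvq]; simp [hqm.1, hqm.2])
        have tm : ((q1:ℕ) = m + 1 - 1) = True := eq_true (by rw [hqm.1, hqm.2])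
        have hab : G (((q1:ℕ):ℤ) - 1) = G ((q1:ℕ):ℤ) := by
          rw [← hGper (((q1:ℕ):ℤ) - 1)]
          congr 1
          have h1' : (q1:ℕ) = 0 := hqm.1
          have h2' : m = 0 := hqm.2
          rw [h1', h2']
          norm_num
        have tz : ((q1:ℕ) = 0) = True := eq_true hqm.1
        simp only [t1, t2, tv, tm, tz, if_true]
        rw [hGc1 q1, hab]
        field_simp
        ring
      · have t1 : (q1 = q1) = True := eq_true rfl
        have t2 : (q1 = q1 - 1) = False := eq_false h2
        simp only [t1, t2, if_true, if_false, zero_add]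
        rw [hGc1 q1]
        by_cases hm : (q1:ℕ) = m
        · have tv : (((q1 + 1 : Fin (m+1)):ℕ) = 0) = True :=
            eq_true (by rw [hvq]; simp [hm])
          have tm : ((q1:ℕ) = m + 1 - 1) = True := eq_true (by omega)
          simp only [tv, tm, if_true]
          field_simp
        · have tv : (((q1 + 1 : Fin (m+1)):ℕ) = 0) = False :=
            eq_false (by rw [hvq]; simp [hm])
          have tm : ((q1:ℕ) = m + 1 - 1) = False := eq_false (fun h => hm (by omega))
          simp only [tv, tm, if_false]
          ring
    · by_cases h2 : q1 = p1 - 1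
      · have hq1p : q1 + 1 = p1 := by rw [h2, sub_add_cancel]
        have t1 : (q1 = p1) = False := eq_false h1
        have t2 : (q1 = p1 - 1) = True := eq_true h2
        simp only [t1, t2, if_true, if_false, add_zero]
        rw [hq1p]
        simp only [Gc, Matrix.map_apply]
        split_ifs <;> ring
      · have t1 : (q1 = p1) = False := eq_false h1
        have t2 : (q1 = p1 - 1) = False := eq_false h2
        simp only [t1, t2, if_false, add_zero, zero_add]
        rw [ite_self]
        ring
  rw [E1, E2, E3]
  simp only [Grho, Nat.add_sub_cancel]
  split_ifs <;> ring


lemma det_Amat (m : ℕ) (ρ : ℂ) : (Amat (m:=m) ρ).det = 1 - ρ := by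
  rw [show (Amat (m:=m) ρ).det
      = 1 - ∏ i : Fin (m+1), (if (i:ℕ) = m + 1 - 1 then ρ else 1) from
    det_cyc (fun i => if (i:ℕ) = m + 1 - 1 then ρ else 1)]
  congr 1
  rw [Finset.prod_eq_single (Fin.last m)]
  · simp [Fin.val_last]
  · intro b _ hb
    rw [if_neg]
    intro h
    exact hb (by rw [Fin.ext_iff, Fin.val_last]; omega)
  · simp

lemma det_Bmat (m : ℕ) (ρ : ℂ) : (Bmat (m:=m) ρ).det = 1 - ρ⁻¹ := by
  rw [← Matrix.det_transpose]
  have hT : (Bmat (m:=m) ρ)ᵀ = Matrix.of fun i j : Fin (m+1) =>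
      (if j = i then (1:ℂ) else 0)
        + (if j = i + 1 then
            -(if (((i+1 : Fin (m+1)):ℕ)) = 0 then ρ⁻¹ else 1) else 0) := by
    ext i j
    show (if i = j then (1:ℂ) else 0) + (if i = j - 1 then -(if (j:ℕ) = 0 then ρ⁻¹ else 1) else 0)
      = _
    have e1 : (i = j) = (j = i) := propext eq_comm
    have e2 : (i = j - 1) = (j = i + 1) :=
      propext ⟨fun h => by rw [h, sub_add_cancel], fun h => by rw [h, add_sub_cancel_right]⟩
    simp only [e1, e2, Matrix.of_apply]
    congr 1
    rcases eq_or_ne j (i+1) with h | h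
    · rw [if_pos h, if_pos h, h]
    · rw [if_neg h, if_neg h]
  rw [hT, det_cyc (fun i : Fin (m+1) => if (((i+1 : Fin (m+1)):ℕ)) = 0 then ρ⁻¹ else 1)]
  congr 1
  rw [Finset.prod_eq_single (Fin.last m)]
  · rw [if_pos]
    rw [fin_val_add_one, if_pos (by simp [Fin.val_last])]
  · intro b _ hb
    rw [if_neg]
    rw [fin_val_add_one]
    have hb' : (b:ℕ) ≠ m := fun h => hb (by rw [Fin.ext_iff, Fin.val_last]; omega)
    simp [hb']
  · simp

lemma det_Mmid (m k : ℕ) (G : ℤ → Matrix (Fin k) (Fin k) ℝ)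
    (hGper : ∀ i, G (i + (m+1 : ℕ)) = G i) :
    (Mmid (m:=m) G).det = ∏ i : Fin (m+1), (((G ((i:ℕ):ℤ)).det : ℝ) : ℂ) := by
  rw [Mmid, Matrix.det_reindex_self, Matrix.det_blockDiagonal]
  have h1 : ∀ i : Fin (m+1), (Gc (m:=m) G i).det
      = (((G (((i:ℕ):ℤ) - 1)).det : ℝ) : ℂ) := by
    intro i
    rw [show Gc (m:=m) G i = (G (((i:ℕ):ℤ) - 1)).map Complex.ofRealHom from rfl]
    exact (RingHom.map_det Complex.ofRealHom _).symm
  rw [Finset.prod_congr rfl (fun i _ => h1 i)]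
  apply Fintype.prod_equiv (Equiv.subRight (1 : Fin (m+1)))
  intro x
  suffices h : G (((x:ℕ):ℤ) - 1) = G ((((Equiv.subRight (1 : Fin (m+1)) x :
      Fin (m+1)):ℕ)):ℤ) by rw [h]
  have hsx : (Equiv.subRight (1 : Fin (m+1)) x : Fin (m+1)) = x - 1 := rfl
  rw [hsx, Fin.coe_sub_one]
  by_cases hx : x = 0
  · rw [if_pos hx]
    have hx' : (x:ℕ) = 0 := by rw [hx]; rfl
    rw [hx', ← hGper (((0:ℕ):ℤ) - 1)]
    congr 1
    push_cast
    ring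
  · rw [if_neg hx]
    have hx' : 1 ≤ (x:ℕ) := by
      rcases Nat.eq_zero_or_pos (x:ℕ) with h | h
      · exact absurd (by rw [Fin.ext_iff, Fin.val_zero]; exact h) hx
      · exact h
    congr 1
    rw [Nat.cast_sub hx']
    norm_num

/-- `det 𝐆_ρ = (-1)^k ρ^{-k} (ρ - 1)^{2k} ∏_{i=1}^n det G_i`. -/
theorem det_Grho (n k : ℕ) [NeZero n] (hk : 1 ≤ k)
    (G : ℤ → Matrix (Fin k) (Fin k) ℝ)
    (hGper : ∀ i, G (i + n) = G i)
    (hGsym : ∀ i, (G i)ᵀ = G i) (hGinv : ∀ i, IsUnit (G i).det)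
    (ρ : ℂ) (hρ : ρ ≠ 0) :
    (Grho n k G ρ).det
      = (-1 : ℂ) ^ k * ρ ^ (-(k : ℤ)) * (ρ - 1) ^ (2 * k)
          * ∏ i : Fin n, ((G ((i : ℕ) : ℤ)).det : ℂ) := by
  obtain ⟨m, rfl⟩ : ∃ m, n = m + 1 :=
    ⟨n - 1, (Nat.succ_pred_eq_of_pos (Nat.pos_of_ne_zero (NeZero.ne n))).symm⟩
  have hGrho : Grho (m+1) k G ρ
      = ((Amat (m:=m) ρ) ⊗ₖ (1 : Matrix (Fin k) (Fin k) ℂ))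
        * ((Mmid (m:=m) G) * ((Bmat (m:=m) ρ) ⊗ₖ (1 : Matrix (Fin k) (Fin k) ℂ))) := by
    ext p q
    obtain ⟨p1, p2⟩ := p
    obtain ⟨q1, q2⟩ := q
    rw [AMB_apply]
    exact (key_entry G ρ hρ hGper p1 q1 p2 q2).symm
  rw [hGrho, Matrix.det_mul, Matrix.det_mul, Matrix.det_kronecker, Matrix.det_kronecker,
    det_Amat, det_Bmat, det_Mmid m k G hGper, Matrix.det_one, Fintype.card_fin, Fintype.card_fin,
    ]
  have halg : (1 - ρ)^k * (1 - ρ⁻¹)^k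
      = (-1:ℂ)^k * ρ^(-(k:ℤ)) * (ρ-1)^(2*k) := by
    rw [_root_.zpow_neg, zpow_natCast, ← inv_pow, pow_mul, ← mul_pow, ← mul_pow, ← mul_pow]
    congr 1
    field_simp
    ring
  linear_combination (∏ i : Fin (m+1), (((G ((i:ℕ):ℤ)).det : ℝ) : ℂ)) * halg
end
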